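/- arXiv:1412.8418 — 11 statements merged into one kernel-verified Lean document; each statement's English description precedes it below -/
import Mathlib

section
/- Let G₁, …, G_s be finite RCC-groups such that for all i ≠ j, the only group homomorphism from G_i to G_j is the trivial one. Then the direct product G₁ × ⋯ × G_s is an RCC-group, i.e., every automorphism of G₁ × ⋯ × G_s has a regular cycle. -/
/-!
Since the `i`-th coordinate of an automorphism `α` of `∏ G i`, restricted to the factor `G j`,
is a homomorphism `G j → G i`, it is trivial for `j ≠ i`: `α` is block diagonal, acting on each
coordinate through an automorphism `β i` of `G i`. If every `x i` lies on a regular cycle of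
`β i`, the period `n` of `x` satisfies `β i ^ n = 1` for all `i`, hence `α ^ n = 1`.
-/

open Function

section Block

variable {ι : Type*} [DecidableEq ι] {G : ι → Type*} [∀ i, Monoid (G i)]

def MonoidHom.piBlock (φ : (∀ i, G i) →* ∀ i, G i) (i : ι) : G i →* G i :=
  (Pi.evalMonoidHom G i).comp (φ.comp (MonoidHom.mulSingle G i))

@[simp]
theorem MonoidHom.piBlock_apply (φ : (∀ i, G i) →* ∀ i, G i) (i : ι) (g : G i) :
    φ.piBlock i g = φ (Pi.mulSingle i g) i :=
  rfl

theorem MonoidHom.apply_eq_piBlock [Finite ι]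
    (hHom : ∀ i j, i ≠ j → ∀ f : G i →* G j, f = 1)
    (φ : (∀ i, G i) →* ∀ i, G i) (x : ∀ i, G i) (i : ι) :
    φ x i = φ.piBlock i (x i) := by
  -- both sides are homomorphisms of `x` agreeing on the factors, which generate the product
  let ψ : (∀ i, G i) →* ∀ i, G i :=
    MonoidHom.pi fun i => (φ.piBlock i).comp (Pi.evalMonoidHom G i)
  suffices φ = ψ from DFunLike.congr_fun this x ▸ rfl
  refine MonoidHom.pi_ext fun j g => funext fun i => ?_
  rcases eq_or_ne j i with rfl | hji
  · simp [ψ]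
  · have h : φ (Pi.mulSingle j g) i = 1 := DFunLike.congr_fun (hHom j i hji
      ((Pi.evalMonoidHom G i).comp (φ.comp (MonoidHom.mulSingle G j)))) g
    simp [ψ, h, Pi.mulSingle_eq_of_ne' hji]

theorem MonoidHom.piBlock_comp [Finite ι]
    (hHom : ∀ i j, i ≠ j → ∀ f : G i →* G j, f = 1)
    (φ ψ : (∀ i, G i) →* ∀ i, G i) (i : ι) :
    (φ.comp ψ).piBlock i = (φ.piBlock i).comp (ψ.piBlock i) := by
  ext g
  exact φ.apply_eq_piBlock hHom _ i

def MulAut.piBlock [Finite ι] (hHom : ∀ i j, i ≠ j → ∀ f : G i →* G j, f = 1)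
    (α : MulAut (∀ i, G i)) (i : ι) : MulAut (G i) :=
  MonoidHom.toMulEquiv (α.toMonoidHom.piBlock i) (α.symm.toMonoidHom.piBlock i)
    (by ext g; simp [← MonoidHom.piBlock_comp hHom])
    (by ext g; simp [← MonoidHom.piBlock_comp hHom])

theorem MulAut.apply_eq_piBlock [Finite ι] (hHom : ∀ i j, i ≠ j → ∀ f : G i →* G j, f = 1)
    (α : MulAut (∀ i, G i)) (x : ∀ i, G i) (i : ι) :
    α x i = MulAut.piBlock hHom α i (x i) :=
  α.toMonoidHom.apply_eq_piBlock hHom x i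

end Block

section Period

variable {ι : Type*} {G : ι → Type*} [∀ i, Monoid (G i)]

theorem MulAut.pow_apply_of_forall_apply_eq {α : MulAut (∀ i, G i)} {β : ∀ i, MulAut (G i)}
    (hαβ : ∀ x i, α x i = β i (x i)) (n : ℕ) (x : ∀ i, G i) (i : ι) :
    (α ^ n) x i = (β i ^ n) (x i) := by
  induction n with
  | zero => rfl
  | succ n ih => rw [pow_succ', MulAut.mul_apply, hαβ, ih, pow_succ', MulAut.mul_apply]

theorem MulAut.minimalPeriod_eq_orderOf_of_forall_apply_eq {α : MulAut (∀ i, G i)}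
    {β : ∀ i, MulAut (G i)} (hαβ : ∀ x i, α x i = β i (x i)) {x : ∀ i, G i}
    (hx : ∀ i, minimalPeriod (β i) (x i) = orderOf (β i)) :
    minimalPeriod α x = orderOf α := by
  -- `minimalPeriod ⇑m` is, definitionally, the period under the tautological action
  have hx' (i : ι) : MulAction.period (β i) (x i) = orderOf (β i) := hx i
  change MulAction.period α x = orderOf α
  set n := MulAction.period α x
  have hβn (i : ι) : β i ^ n = 1 := by
    rw [← orderOf_dvd_iff_pow_eq_one, ← hx' i, ← MulAction.pow_smul_eq_iff_period_dvd]
    exact (MulAut.pow_apply_of_forall_apply_eq hαβ n x i).symm.trans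
      (congrFun (MulAction.pow_period_smul α x) i)
  refine (MulAction.period_dvd_orderOf α x).antisymm (orderOf_dvd_of_pow_eq_one ?_)
  ext y i
  rw [MulAut.pow_apply_of_forall_apply_eq hαβ, hβn]
  rfl

end Period

theorem stmt1_general {s : ℕ} (G : Fin s → Type*) [∀ i, Group (G i)]
    (hRCC : ∀ i, ∀ β : MulAut (G i), ∃ x : G i, Function.minimalPeriod (⇑β) x = orderOf β)
    (hHom : ∀ i j, i ≠ j → ∀ f : G i →* G j, f = 1) :
    ∀ α : MulAut (∀ i, G i), ∃ x : ∀ i, G i, Function.minimalPeriod (⇑α) x = orderOf α := by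
  intro α
  choose x hx using fun i => hRCC i (MulAut.piBlock hHom α i)
  exact ⟨x, MulAut.minimalPeriod_eq_orderOf_of_forall_apply_eq (MulAut.apply_eq_piBlock hHom α) hx⟩

/-- If `G₁, …, G_s` are finite RCC-groups with only trivial homomorphisms between distinct
factors, then every automorphism of `G₁ × ⋯ × G_s` has a regular cycle. -/
theorem stmt1 {s : ℕ} (G : Fin s → Type*) [∀ i, Group (G i)] [∀ i, Fintype (G i)]
    (hRCC : ∀ i, ∀ β : MulAut (G i), ∃ x : G i, Function.minimalPeriod (⇑β) x = orderOf β)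
    (hHom : ∀ i j, i ≠ j → ∀ f : G i →* G j, f = 1) :
    ∀ α : MulAut (∀ i, G i), ∃ x : ∀ i, G i, Function.minimalPeriod (⇑α) x = orderOf α :=
  stmt1_general G hRCC hHom
end

section
/- Let p be a prime, n a positive integer, and α an automorphism of the elementary abelian group (ℤ/pℤ)^n. Then there exists an 𝔽_p-basis v₁, …, v_n of (ℤ/pℤ)^n such that for each i, the cycle length of v_i under α equals the order of α. -/
/-!
Through `α`, the space `V` becomes a `K[X]`-module whose annihilator is generated by the minimal
polynomial `μ`. A vector `x` whose annihilator is exactly `(μ)` has cycle length the order of `α`: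
`α^d x = x` means `X^d - 1 ∈ (μ)`, i.e. `α^d = 1`. Over a PID such a vector `v` exists. A vector
has annihilator `(μ)` iff `(μ / q) • x ≠ 0` for every prime `q ∣ μ`, so the Chinese remainder
theorem gives, for every `x`, some `r` with `x + r • v` of this kind. Since `r • v` is a
`K`-combination of the vectors `X^k • v`, which again have annihilator `(μ)`, the vectors of full
cycle length span `V`, and a basis can be extracted from them.
-/

open Polynomial Module Function UniqueFactorizationMonoid LinearMap Submodule

section CommRing

variable {R M : Type*} [CommRing R] [AddCommGroup M] [Module R M]

theorem exists_add_smul_forall_notMem {Q : Finset R} (hQ : (Q : Set R).Pairwise IsCoprime)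
    (N : R → Submodule R M) (hN : ∀ q ∈ Q, ∀ y : M, q • y ∈ N q) {a : M}
    (ha : ∀ q ∈ Q, a ∉ N q) (x : M) : ∃ r : R, ∀ q ∈ Q, x + r • a ∉ N q := by
  classical
  set Q₀ := Q.filter (x ∉ N ·)
  set Q₁ := Q.filter (x ∈ N ·)
  obtain ⟨s, t, hst⟩ : IsCoprime (∏ q ∈ Q₀, q) (∏ q ∈ Q₁, q) :=
    IsCoprime.prod_left fun i hi ↦ IsCoprime.prod_right fun j hj ↦ by
      rw [Finset.mem_filter] at hi hj
      exact hQ hi.1 hj.1 (by rintro rfl; exact hi.2 hj.2)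
  have hkill : ∀ P ⊆ Q, ∀ c : R, ∀ q ∈ P, ∀ y : M, (c * ∏ q ∈ P, q) • y ∈ N q := by
    intro P hPQ c q hq y
    obtain ⟨e, he⟩ := (Finset.dvd_prod_of_mem (fun q ↦ q) hq).mul_left c
    rw [he, mul_smul]
    exact hN q (hPQ hq) _
  -- `r = s * ∏ Q₀` is `0` modulo the `q` with `x ∉ N q` and `1` modulo the others.
  refine ⟨s * ∏ q ∈ Q₀, q, fun q hq hmem ↦ ?_⟩
  by_cases hx : x ∈ N q
  · have hsplit : x + (s * ∏ q ∈ Q₀, q) • a = a + (x - (t * ∏ q ∈ Q₁, q) • a) := by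
      rw [eq_sub_of_add_eq hst, sub_smul, one_smul]
      abel
    rw [hsplit] at hmem
    refine ha q hq ((N q).add_mem_iff_left (sub_mem hx ?_) |>.1 hmem)
    exact hkill Q₁ (Finset.filter_subset _ _) t q (Finset.mem_filter.2 ⟨hq, hx⟩) a
  · refine hx ((N q).add_mem_iff_left ?_ |>.1 hmem)
    exact hkill Q₀ (Finset.filter_subset _ _) s q (Finset.mem_filter.2 ⟨hq, hx⟩) a

theorem ker_toSpanSingleton_smul_of_injective {a : R} (ha : Injective (a • · : M → M)) (y : M) :
    ker (toSpanSingleton R M (a • y)) = ker (toSpanSingleton R M y) := by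
  ext g
  simp only [mem_ker, toSpanSingleton_apply, smul_comm g a]
  exact ⟨fun h ↦ ha (h.trans (smul_zero a).symm), fun h ↦ by rw [h, smul_zero]⟩

end CommRing

section EuclideanDomain

variable {R M : Type*} [EuclideanDomain R] [NormalizationMonoid R] [AddCommGroup M] [Module R M]

theorem dvd_of_smul_eq_zero_of_forall_div_smul_ne_zero {μ : R} (hμ : μ ≠ 0) {y : M}
    (hμy : μ • y = 0) (hy : ∀ q ∈ normalizedFactors μ, (μ / q) • y ≠ 0) {g : R}
    (hg : g • y = 0) : μ ∣ g := by
  classical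
  have hd : EuclideanDomain.gcd g μ • y = 0 := by
    rw [EuclideanDomain.gcd_eq_gcd_ab, add_smul, mul_comm g, mul_comm μ, mul_smul, mul_smul,
      hg, hμy, smul_zero, smul_zero, add_zero]
  obtain ⟨c, hc⟩ := EuclideanDomain.gcd_dvd_right g μ
  by_cases hcu : IsUnit c
  · rw [hc]
    exact hcu.mul_right_dvd.2 (EuclideanDomain.gcd_dvd_left g μ)
  have hc0 : c ≠ 0 := by rintro rfl; exact hμ (by rw [hc, mul_zero])
  obtain ⟨p, hp, hpc⟩ := WfDvdMonoid.exists_irreducible_factor hcu hc0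
  obtain ⟨q, hq, hpq⟩ :=
    exists_mem_normalizedFactors_of_dvd hμ hp (hpc.trans (Dvd.intro_left _ hc.symm))
  obtain ⟨c', rfl⟩ := hpq.symm.dvd.trans hpc
  have hq0 : q ≠ 0 := (irreducible_of_normalized_factor q hq).ne_zero
  refine (hy q hq ?_).elim
  rw [hc, mul_left_comm, mul_div_cancel_left₀ _ hq0, mul_comm, mul_smul, hd, smul_zero]

theorem exists_ker_toSpanSingleton_add_smul_eq {μ : R} (hμ : μ ≠ 0) (hμM : ∀ y : M, μ • y = 0)
    {v : M} (hv : ker (toSpanSingleton R M v) = Ideal.span {μ}) (x : M) :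
    ∃ r : R, ker (toSpanSingleton R M (x + r • v)) = Ideal.span {μ} := by
  classical
  have hQ : ((normalizedFactors μ).toFinset : Set R).Pairwise IsCoprime := by
    intro p hp q hq hpq
    rw [Finset.mem_coe, Multiset.mem_toFinset] at hp hq
    rw [(irreducible_of_normalized_factor p hp).coprime_iff_not_dvd]
    exact fun hdvd ↦ hpq (mem_normalizedFactors_eq_of_associated hp hq
      ((irreducible_of_normalized_factor p hp).associated_of_dvd
        (irreducible_of_normalized_factor q hq) hdvd))
  have hN : ∀ q ∈ (normalizedFactors μ).toFinset, ∀ y : M, q • y ∈ torsionBy R M (μ / q) := by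
    intro q hq y
    rw [Multiset.mem_toFinset] at hq
    rw [mem_torsionBy_iff, ← mul_smul, mul_comm,
      EuclideanDomain.mul_div_cancel' (irreducible_of_normalized_factor q hq).ne_zero
        (dvd_of_mem_normalizedFactors hq), hμM]
  have hv' : ∀ q ∈ (normalizedFactors μ).toFinset, v ∉ torsionBy R M (μ / q) := by
    intro q hq hvq
    rw [Multiset.mem_toFinset] at hq
    have hq0 := (irreducible_of_normalized_factor q hq).ne_zero
    have hμq := EuclideanDomain.mul_div_cancel' hq0 (dvd_of_mem_normalizedFactors hq)
    have hdvd : μ ∣ μ / q := by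
      rw [← Ideal.mem_span_singleton, ← hv, mem_ker, toSpanSingleton_apply]
      exact (mem_torsionBy_iff _ _).1 hvq
    have hμq0 : μ / q ≠ 0 := fun h ↦ hμ (by rw [← hμq, h, mul_zero])
    have hq1 : q * (μ / q) ∣ 1 * (μ / q) := by rwa [hμq, one_mul]
    exact (irreducible_of_normalized_factor q hq).not_isUnit
      (isUnit_of_dvd_one ((mul_dvd_mul_iff_right hμq0).1 hq1))
  obtain ⟨r, hr⟩ := exists_add_smul_forall_notMem hQ (fun q ↦ torsionBy R M (μ / q)) hN hv' x
  refine ⟨r, le_antisymm (fun g hg ↦ ?_) (fun g hg ↦ ?_)⟩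
  · refine Ideal.mem_span_singleton.2 (dvd_of_smul_eq_zero_of_forall_div_smul_ne_zero hμ (hμM _)
      (fun q hq h ↦ hr q (Multiset.mem_toFinset.2 hq) ((mem_torsionBy_iff _ _).2 h)) hg)
  · obtain ⟨e, rfl⟩ := Ideal.mem_span_singleton.1 hg
    rw [mem_ker, toSpanSingleton_apply, mul_comm, mul_smul, hμM, smul_zero]

end EuclideanDomain

section LinearEquiv

variable {K V : Type*} [Field K] [AddCommGroup V] [Module K V] (φ : V ≃ₗ[K] V)

theorem minimalPeriod_eq_orderOf_of_ker_toSpanSingleton_eq {x : V}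
    (hx : ker (toSpanSingleton K[X] _ (AEval'.of φ.toLinearMap x)) =
      Ideal.span {minpoly K φ.toLinearMap}) :
    minimalPeriod φ x = orderOf φ := by
  have horder : ∀ d, IsPeriodicPt φ d x → orderOf φ ∣ d := by
    intro d hd
    have hmem : (X ^ d - 1 : K[X]) ∈ Ideal.span {minpoly K φ.toLinearMap} := by
      rw [← hx, mem_ker, toSpanSingleton_apply, sub_smul, one_smul, AEval'.X_pow_smul_of,
        sub_eq_zero]
      change AEval'.of _ ((φ.toLinearMap ^ d) x) = _
      rw [Module.End.coe_pow, LinearEquiv.coe_coe]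
      exact congrArg _ hd
    rw [Ideal.mem_span_singleton, minpoly.dvd_iff, map_sub, aeval_X_pow, map_one,
      sub_eq_zero] at hmem
    refine orderOf_dvd_of_pow_eq_one (LinearEquiv.ext fun y ↦ ?_)
    simpa [LinearEquiv.coe_pow, Module.End.coe_pow] using LinearMap.congr_fun hmem y
  refine Nat.dvd_antisymm (IsPeriodicPt.minimalPeriod_dvd ?_)
    (horder _ (isPeriodicPt_minimalPeriod _ _))
  rw [IsPeriodicPt, IsFixedPt, ← LinearEquiv.coe_pow, pow_orderOf_eq_one]
  rfl

theorem X_pow_smul_injective (k : ℕ) :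
    Injective ((X ^ k : K[X]) • · : AEval' φ.toLinearMap → AEval' φ.toLinearMap) := by
  intro y z h
  obtain ⟨y, rfl⟩ := (AEval'.of φ.toLinearMap).surjective y
  obtain ⟨z, rfl⟩ := (AEval'.of φ.toLinearMap).surjective z
  simp only [AEval'.X_pow_smul_of, EmbeddingLike.apply_eq_iff_eq] at h
  change (φ.toLinearMap ^ k) y = (φ.toLinearMap ^ k) z at h
  rw [Module.End.coe_pow, LinearEquiv.coe_coe, (φ.injective.iterate k).eq_iff] at h
  rw [h]

variable [FiniteDimensional K V]

theorem span_setOf_ker_toSpanSingleton_eq_minpoly :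
    span K {y : AEval' φ.toLinearMap |
      ker (toSpanSingleton K[X] _ y) = Ideal.span {minpoly K φ.toLinearMap}} = ⊤ := by
  classical
  set S := {y : AEval' φ.toLinearMap |
      ker (toSpanSingleton K[X] _ y) = Ideal.span {minpoly K φ.toLinearMap}}
  have hμ : minpoly K φ.toLinearMap ≠ 0 := minpoly.ne_zero (Algebra.IsIntegral.isIntegral _)
  have hμM : ∀ y : AEval' φ.toLinearMap, minpoly K φ.toLinearMap • y = 0 := by
    rw [← Module.mem_annihilator, ← span_minpoly_eq_annihilator]
    exact Ideal.mem_span_singleton_self _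
  obtain ⟨v, hv⟩ := exists_ker_toSpanSingleton_eq_annihilator K[X] (AEval' φ.toLinearMap)
  rw [← span_minpoly_eq_annihilator] at hv
  have hXv : ∀ k, (X ^ k : K[X]) • v ∈ S := fun k ↦
    (ker_toSpanSingleton_smul_of_injective (X_pow_smul_injective φ k) v).trans hv
  have hrv : ∀ r : K[X], r • v ∈ span K S := by
    intro r
    induction r using Polynomial.induction_on' with
    | add f g hf hg => rw [add_smul]; exact add_mem hf hg
    | monomial k a =>
      rw [← C_mul_X_pow_eq_monomial, mul_smul, ← algebraMap_eq, algebraMap_smul]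
      exact smul_mem _ a (subset_span (hXv k))
  refine eq_top_iff.2 fun x _ ↦ ?_
  obtain ⟨r, hr⟩ := exists_ker_toSpanSingleton_add_smul_eq hμ hμM hv x
  simpa using sub_mem (subset_span hr : x + r • v ∈ span K S) (hrv r)

theorem span_setOf_minimalPeriod_eq_orderOf :
    span K {x : V | minimalPeriod φ x = orderOf φ} = ⊤ := by
  refine eq_top_iff.2 fun x _ ↦ ?_
  have hx : AEval'.of φ.toLinearMap x ∈ span K _ :=
    (span_setOf_ker_toSpanSingleton_eq_minpoly φ).symm ▸ mem_top
  have hx' := mem_map_of_mem (f := (AEval'.of φ.toLinearMap).symm.toLinearMap) hx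
  rw [Submodule.map_span, LinearEquiv.coe_coe, LinearEquiv.symm_apply_apply] at hx'
  refine span_mono (Set.image_subset_iff.2 fun y hy ↦ ?_) hx'
  refine minimalPeriod_eq_orderOf_of_ker_toSpanSingleton_eq φ ?_
  simpa using hy

end LinearEquiv

theorem Module.Basis.exists_fin_forall_mem_of_span_eq_top {K V : Type*} [DivisionRing K]
    [AddCommGroup V] [Module K V] [FiniteDimensional K V] {s : Set V} (hs : span K s = ⊤) {n : ℕ}
    (hn : finrank K V = n) : ∃ b : Basis (Fin n) K V, ∀ i, b i ∈ s := by
  let b := Basis.ofSpan hs.ge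
  refine ⟨b.reindex (b.indexEquiv (finBasisOfFinrankEq K V hn)), fun i ↦ ?_⟩
  rw [Basis.reindex_apply]
  exact Basis.ofSpan_subset hs.ge (Set.mem_range_self _)

theorem AddAut.coe_nsmul {A : Type*} [Add A] (α : AddAut A) (d : ℕ) : ⇑(d • α) = (⇑α)^[d] := by
  induction d with
  | zero => rfl
  | succ d ih => rw [succ_nsmul', AddAut.coe_add, ih, iterate_succ']

theorem stmt2_general (p : ℕ) [Fact p.Prime] (n : ℕ)
    (α : AddAut (Fin n → ZMod p)) :
    ∃ v : Module.Basis (Fin n) (ZMod p) (Fin n → ZMod p),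
      ∀ i : Fin n, Function.minimalPeriod (⇑α) (v i) = addOrderOf α := by
  let φ := LinearEquiv.ofBijective (α.toAddMonoidHom.toZModLinearMap p) α.bijective
  have horder : orderOf φ = addOrderOf α := by
    rw [← orderOf_ofAdd_eq_addOrderOf, orderOf_eq_orderOf_iff]
    intro d
    rw [← ofAdd_nsmul, ofAdd_eq_one, LinearEquiv.ext_iff, DFunLike.ext_iff,
      LinearEquiv.coe_pow, AddAut.coe_nsmul]
    rfl
  rw [← horder]
  exact Basis.exists_fin_forall_mem_of_span_eq_top (span_setOf_minimalPeriod_eq_orderOf φ)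
    (by simp)

/-- For every automorphism `α` of the elementary abelian group `(ℤ/pℤ)^n`, there is an
`𝔽_p`-basis whose vectors all have cycle length under `α` equal to the order of `α`. -/
theorem stmt2 (p : ℕ) [Fact p.Prime] (n : ℕ) (hn : 0 < n)
    (α : AddAut (Fin n → ZMod p)) :
    ∃ v : Module.Basis (Fin n) (ZMod p) (Fin n → ZMod p),
      ∀ i : Fin n, Function.minimalPeriod (⇑α) (v i) = addOrderOf α :=
  stmt2_general p n α
end

section
/- Every finite vector space satisfies the RCC: if V is a finite vector space over a finite field k and α is a k-linear automorphism of V, then some vector v ∈ V has cycle length under α equal to the order of α. -/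
/-!
Make `V` a `k[X]`-module with `X` acting as `α`. Since `k[X]` is a PID, the structure theorem
yields a vector whose annihilator is the annihilator of the whole module, the ideal generated by
the minimal polynomial. For such a vector `v`, `α ^ n v = v` means that `X ^ n - 1` kills `v`,
hence is divisible by the minimal polynomial, hence `α ^ n = 1`.
-/

open Polynomial Function

namespace Module.End

variable {K V : Type*} [Field K] [AddCommGroup V] [Module K V] [Module.Finite K V]

theorem exists_aeval_apply_eq_zero_iff_minpoly_dvd (φ : Module.End K V) :
    ∃ v : V, ∀ q : K[X], aeval φ q v = 0 ↔ minpoly K φ ∣ q := by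
  obtain ⟨v, hv⟩ := exists_ker_toSpanSingleton_eq_annihilator K[X] (AEval' φ)
  obtain ⟨v, rfl⟩ := (AEval'.of φ).surjective v
  refine ⟨v, fun q => ?_⟩
  rw [← Ideal.mem_span_singleton, span_minpoly_eq_annihilator, ← hv, LinearMap.mem_ker,
    LinearMap.toSpanSingleton_apply, ← AEval.of_aeval_smul, LinearEquiv.map_eq_zero_iff]
  rfl

theorem exists_minimalPeriod_eq_orderOf (φ : Module.End K V) :
    ∃ v : V, minimalPeriod φ v = orderOf φ := by
  obtain ⟨v, hv⟩ := exists_aeval_apply_eq_zero_iff_minpoly_dvd φ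
  -- `orderOf φ` unfolds to `minimalPeriod (φ * ·) 1`.
  refine ⟨v, minimalPeriod_eq_minimalPeriod_iff.mpr fun n => ?_⟩
  have h := hv (X ^ n - 1)
  simp only [map_sub, map_pow, aeval_X, map_one, LinearMap.sub_apply, one_apply, sub_eq_zero,
    minpoly.dvd_iff] at h
  rwa [isPeriodicPt_mul_iff_pow_eq_one, IsPeriodicPt, IsFixedPt, ← coe_pow]

end Module.End

theorem stmt5_general {k V : Type*} [Field k] [AddCommGroup V] [Module k V] [Fintype V]
    (α : V ≃ₗ[k] V) :
    ∃ v : V, Function.minimalPeriod (⇑α) v = orderOf α := by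
  obtain ⟨v, hv⟩ := Module.End.exists_minimalPeriod_eq_orderOf (α : Module.End k V)
  rw [LinearEquiv.coe_coe] at hv
  exact ⟨v, hv.trans <| orderOf_injective LinearEquiv.automorphismGroup.toLinearMapMonoidHom
    LinearEquiv.toLinearMap_injective α⟩

/-- Every finite vector space satisfies the RCC: every linear automorphism of a finite
vector space over a finite field has a regular cycle. -/
theorem stmt5 {k V : Type*} [Field k] [Fintype k] [AddCommGroup V] [Module k V] [Fintype V]
    (α : V ≃ₗ[k] V) :
    ∃ v : V, Function.minimalPeriod (⇑α) v = orderOf α :=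
  stmt5_general α
end

section
/- Let G be a group (not necessarily finite) and α an automorphism of G of finite order. Let x, y ∈ G, let l_x and l_y denote the cycle lengths of x and y under α, and let p be a prime such that the p-adic valuations ν_p(l_x) and ν_p(l_y) are distinct. Then the cycle length l of the product x·y under α satisfies ν_p(l) = max{ν_p(l_x), ν_p(l_y)}. -/
/-!
For a multiplicative map `f` on a cancellative monoid, a common period of two of the
elements `x`, `y`, `x * y` is a period of the third. Hence each of the three cycle lengths
divides the lcm of the other two, so at every prime `p` each valuation is at most the maximum
of the other two. When two of these valuations differ, this forces the third to equal the
larger one, as for an ultrametric.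
-/

namespace Function

variable {M F : Type*} [Monoid M] [FunLike F M M] [MulHomClass F M M] {f : F} {n : ℕ} {x y : M}

protected theorem IsPeriodicPt.mul (hx : IsPeriodicPt f n x) (hy : IsPeriodicPt f n y) :
    IsPeriodicPt f n (x * y) := by
  rw [IsPeriodicPt, IsFixedPt, iterate_map_mul, hx.eq, hy.eq]

theorem IsPeriodicPt.left_of_mul [IsRightCancelMul M] (hxy : IsPeriodicPt f n (x * y))
    (hy : IsPeriodicPt f n y) : IsPeriodicPt f n x := by
  have := hxy.eq
  rwa [iterate_map_mul, hy.eq, mul_left_inj] at this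

theorem IsPeriodicPt.right_of_mul [IsLeftCancelMul M] (hxy : IsPeriodicPt f n (x * y))
    (hx : IsPeriodicPt f n x) : IsPeriodicPt f n y := by
  have := hxy.eq
  rwa [iterate_map_mul, hx.eq, mul_right_inj] at this

variable (f x y)

theorem minimalPeriod_mul_dvd_lcm :
    minimalPeriod f (x * y) ∣ (minimalPeriod f x).lcm (minimalPeriod f y) :=
  IsPeriodicPt.minimalPeriod_dvd <|
    ((isPeriodicPt_minimalPeriod f x).trans_dvd (Nat.dvd_lcm_left _ _)).mul
      ((isPeriodicPt_minimalPeriod f y).trans_dvd (Nat.dvd_lcm_right _ _))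

theorem minimalPeriod_left_dvd_lcm [IsRightCancelMul M] :
    minimalPeriod f x ∣ (minimalPeriod f (x * y)).lcm (minimalPeriod f y) :=
  IsPeriodicPt.minimalPeriod_dvd <|
    ((isPeriodicPt_minimalPeriod f (x * y)).trans_dvd (Nat.dvd_lcm_left _ _)).left_of_mul
      ((isPeriodicPt_minimalPeriod f y).trans_dvd (Nat.dvd_lcm_right _ _))

theorem minimalPeriod_right_dvd_lcm [IsLeftCancelMul M] :
    minimalPeriod f y ∣ (minimalPeriod f (x * y)).lcm (minimalPeriod f x) :=
  IsPeriodicPt.minimalPeriod_dvd <|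
    ((isPeriodicPt_minimalPeriod f (x * y)).trans_dvd (Nat.dvd_lcm_left _ _)).right_of_mul
      ((isPeriodicPt_minimalPeriod f x).trans_dvd (Nat.dvd_lcm_right _ _))

end Function

namespace Nat

theorem factorization_le_max_of_dvd_lcm {a b c : ℕ} (p : ℕ) (hb : b ≠ 0) (hc : c ≠ 0)
    (h : a ∣ b.lcm c) : a.factorization p ≤ max (b.factorization p) (c.factorization p) := by
  have hlcm : b.lcm c ≠ 0 := lcm_ne_zero hb hc
  have ha : a ≠ 0 := ne_zero_of_dvd_ne_zero hlcm h
  simpa [factorization_lcm hb hc] using (factorization_le_iff_dvd ha hlcm).2 h p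

theorem factorization_eq_max_of_dvd_lcm {a b c : ℕ} (p : ℕ) (ha : a ≠ 0) (hb : b ≠ 0)
    (hc : c ≠ 0) (hcab : c ∣ a.lcm b) (habc : a ∣ c.lcm b) (hbac : b ∣ c.lcm a)
    (hab : a.factorization p ≠ b.factorization p) :
    c.factorization p = max (a.factorization p) (b.factorization p) := by
  have := factorization_le_max_of_dvd_lcm p ha hb hcab
  have := factorization_le_max_of_dvd_lcm p hc hb habc
  have := factorization_le_max_of_dvd_lcm p hc ha hbac
  omega

end Nat

theorem stmt7_general {G : Type*} [Group G] (α : MulAut G) (hα : IsOfFinOrder α)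
    (x y : G) (p : ℕ)
    (h : (Function.minimalPeriod (⇑α) x).factorization p ≠
         (Function.minimalPeriod (⇑α) y).factorization p) :
    (Function.minimalPeriod (⇑α) (x * y)).factorization p =
      max ((Function.minimalPeriod (⇑α) x).factorization p)
          ((Function.minimalPeriod (⇑α) y).factorization p) := by
  have hpos (z : G) : Function.minimalPeriod α z ≠ 0 :=
    (MulAction.period_pos_of_orderOf_pos hα.orderOf_pos z).ne'
  exact Nat.factorization_eq_max_of_dvd_lcm p (hpos x) (hpos y) (hpos (x * y))
    (Function.minimalPeriod_mul_dvd_lcm α x y) (Function.minimalPeriod_left_dvd_lcm α x y)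
    (Function.minimalPeriod_right_dvd_lcm α x y) h

/-- If `α` is an automorphism of finite order of a group `G` and `x, y ∈ G` have cycle
lengths with distinct `p`-adic valuations, then the cycle length of `x·y` has `p`-adic
valuation equal to the maximum of the two. -/
theorem stmt7 {G : Type*} [Group G] (α : MulAut G) (hα : IsOfFinOrder α)
    (x y : G) (p : ℕ) (hp : p.Prime)
    (h : (Function.minimalPeriod (⇑α) x).factorization p ≠
         (Function.minimalPeriod (⇑α) y).factorization p) :
    (Function.minimalPeriod (⇑α) (x * y)).factorization p =
      max ((Function.minimalPeriod (⇑α) x).factorization p)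
          ((Function.minimalPeriod (⇑α) y).factorization p) :=
  stmt7_general α hα x y p h
end

section
/- Let G be a group (not necessarily finite) and α an automorphism of G of finite order o. Then for any two distinct primes p and q, there exists an element of G whose cycle length under α is divisible by p^{ν_p(o)} · q^{ν_q(o)}. -/
/-!
Write `o` for the order of `α` and `m` for the cycle length of `g`, so `m ∣ o`. If `p ∣ o` and
`ordProj[p] o` does not divide `m`, then `m ∣ o / p`, i.e. `g` is fixed by `α ^ (o / p)`, an
automorphism of order `p`. So the elements violating the `p`-condition lie in a proper subgroup,
and likewise for `q`; a group is never the union of two proper subgroups.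
-/

open Function

theorem Nat.ordProj_dvd_of_dvd_of_not_dvd_div {m n p : ℕ} (hp : p.Prime) (hmn : m ∣ n)
    (hm : ¬m ∣ n / p) : ordProj[p] n ∣ m := by
  obtain ⟨c, rfl⟩ := hmn
  have hpc : ¬p ∣ c := by
    rintro ⟨d, rfl⟩
    exact hm ⟨d, by rw [mul_left_comm, Nat.mul_div_cancel_left _ hp.pos]⟩
  have hcop : Nat.Coprime (ordProj[p] (m * c)) c := (hp.coprime_iff_not_dvd.2 hpc).pow_left _
  exact hcop.dvd_of_dvd_mul_right (Nat.ordProj_dvd _ _)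

theorem MulAction.ordProj_orderOf_dvd_period {M X : Type*} [Monoid M] [MulAction M X] {m : M}
    {x : X} {p : ℕ} (hp : p.Prime) (hx : m ^ (orderOf m / p) • x ≠ x) :
    ordProj[p] (orderOf m) ∣ period m x :=
  Nat.ordProj_dvd_of_dvd_of_not_dvd_div hp (period_dvd_orderOf m x)
    (mt pow_smul_eq_iff_period_dvd.2 hx)

theorem Subgroup.exists_forall_notMem_of_ne_top {G : Type*} [Group G] (H K : Subgroup G) :
    ∃ g : G, (H ≠ ⊤ → g ∉ H) ∧ (K ≠ ⊤ → g ∉ K) := by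
  by_cases hH : H = ⊤ <;> by_cases hK : K = ⊤
  · exact ⟨1, fun h => (h hH).elim, fun h => (h hK).elim⟩
  · obtain ⟨g, -, hg⟩ := SetLike.exists_of_lt (lt_top_iff_ne_top.2 hK)
    exact ⟨g, fun h => (h hH).elim, fun _ => hg⟩
  · obtain ⟨g, -, hg⟩ := SetLike.exists_of_lt (lt_top_iff_ne_top.2 hH)
    exact ⟨g, fun _ => hg, fun h => (h hK).elim⟩
  · have hcover : ¬((⊤ : Subgroup G) : Set G) ⊆ H ∪ K := by
      rw [SubgroupClass.subset_union, top_le_iff, top_le_iff]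
      tauto
    obtain ⟨g, -, hg⟩ := Set.not_subset.1 hcover
    exact ⟨g, fun _ hgH => hg (.inl hgH), fun _ hgK => hg (.inr hgK)⟩

theorem MulAut.exists_subgroup_ordProj_orderOf_dvd_minimalPeriod {G : Type*} [Group G]
    (α : MulAut G) {p : ℕ} (hp : p.Prime) :
    ∃ H : Subgroup G, ∀ g : G, (H ≠ ⊤ → g ∉ H) →
      ordProj[p] (orderOf α) ∣ minimalPeriod (⇑α) g := by
  by_cases hν : (orderOf α).factorization p = 0
  · exact ⟨⊤, fun g _ => by rw [hν, pow_zero]; exact one_dvd _⟩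
  obtain ⟨hpo, ho⟩ : p ∣ orderOf α ∧ orderOf α ≠ 0 := by
    simpa [Nat.factorization_eq_zero_iff, hp] using hν
  set β := α ^ (orderOf α / p)
  have hβ : β ≠ 1 := by
    rw [Ne, ← orderOf_eq_one_iff, orderOf_pow_orderOf_div ho hpo]
    exact hp.ne_one
  refine ⟨β.toMonoidHom.eqLocus (MonoidHom.id G), fun g hg => ?_⟩
  exact MulAction.ordProj_orderOf_dvd_period hp
    (hg fun htop => hβ (MulEquiv.ext ((Subgroup.eq_top_iff' _).1 htop)))

theorem stmt8_general {G : Type*} [Group G] (α : MulAut G)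
    (p q : ℕ) (hp : p.Prime) (hq : q.Prime) (hpq : p ≠ q) :
    ∃ g : G, p ^ ((orderOf α).factorization p) * q ^ ((orderOf α).factorization q) ∣
      Function.minimalPeriod (⇑α) g := by
  obtain ⟨H, hH⟩ := α.exists_subgroup_ordProj_orderOf_dvd_minimalPeriod hp
  obtain ⟨K, hK⟩ := α.exists_subgroup_ordProj_orderOf_dvd_minimalPeriod hq
  obtain ⟨g, hgH, hgK⟩ := H.exists_forall_notMem_of_ne_top K
  exact ⟨g, (Nat.coprime_pow_primes _ _ hp hq hpq).mul_dvd_of_dvd_of_dvd (hH g hgH) (hK g hgK)⟩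

/-- If `α` is an automorphism of finite order `o` of a group `G`, then for any two distinct
primes `p` and `q`, some element of `G` has cycle length under `α` divisible by
`p^{ν_p(o)} · q^{ν_q(o)}`. -/
theorem stmt8 {G : Type*} [Group G] (α : MulAut G) (hα : IsOfFinOrder α)
    (p q : ℕ) (hp : p.Prime) (hq : q.Prime) (hpq : p ≠ q) :
    ∃ g : G, p ^ ((orderOf α).factorization p) * q ^ ((orderOf α).factorization q) ∣
      Function.minimalPeriod (⇑α) g :=
  stmt8_general α p q hp hq hpq
end

section
/- Let G be a group (not necessarily finite) and α an automorphism of G of finite order o. If o is divisible by at most two distinct primes, then α satisfies the RCC, i.e., some element of G has cycle length under α equal to o. -/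
/-!
Let `o` be the order of `α`. The `α`-period of `g` divides `o`, and a proper divisor of `o`
divides `o / p` for some prime `p ∣ o`; so `g` has period `o` as soon as it is moved by every
`α ^ (o / p)`, i.e. avoids the fixed-point subgroups of these powers. Each of them is proper,
since `α ^ (o / p) ≠ 1`, and a group is never the union of two proper subgroups.
-/

theorem Nat.exists_prime_dvd_div_of_dvd_of_ne {d n : ℕ} (hd : d ∣ n) (hne : d ≠ n) :
    ∃ p, p.Prime ∧ p ∣ n ∧ d ∣ n / p := by
  obtain ⟨a, rfl⟩ := hd
  have ha : a ≠ 1 := by rintro rfl; exact hne (mul_one d).symm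
  refine ⟨a.minFac, Nat.minFac_prime ha, Dvd.dvd.mul_left a.minFac_dvd d, ?_⟩
  rw [Nat.mul_div_assoc d a.minFac_dvd]
  exact dvd_mul_right d _

namespace Function

theorem minimalPeriod_eq_of_isPeriodicPt_and_div_prime {α : Type*} {f : α → α} {x : α}
    {n : ℕ} (hx : IsPeriodicPt f n x)
    (hp : ∀ p, p.Prime → p ∣ n → ¬ IsPeriodicPt f (n / p) x) :
    minimalPeriod f x = n := by
  by_contra hne
  obtain ⟨p, hp_prime, hpn, hdvd⟩ :=
    Nat.exists_prime_dvd_div_of_dvd_of_ne hx.minimalPeriod_dvd hne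
  exact hp p hp_prime hpn (isPeriodicPt_iff_minimalPeriod_dvd.2 hdvd)

end Function

theorem IsOfFinOrder.pow_orderOf_div_prime_ne_one {M : Type*} [Monoid M] {x : M}
    (hx : IsOfFinOrder x) {p : ℕ} (hp : p.Prime) (hpx : p ∣ orderOf x) :
    x ^ (orderOf x / p) ≠ 1 :=
  pow_ne_one_of_lt_orderOf (Nat.div_pos (Nat.le_of_dvd hx.orderOf_pos hpx) hp.pos).ne'
    (Nat.div_lt_self hx.orderOf_pos hp.one_lt)

namespace Subgroup

variable {G : Type*} [Group G]

theorem exists_notMem_notMem {H K : Subgroup G} (hH : H ≠ ⊤) (hK : K ≠ ⊤) :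
    ∃ g, g ∉ H ∧ g ∉ K := by
  obtain ⟨x, hx⟩ := SetLike.exists_not_mem_of_ne_top H hH
  obtain ⟨y, hy⟩ := SetLike.exists_not_mem_of_ne_top K hK
  by_cases hxK : x ∈ K
  · by_cases hyH : y ∈ H
    · refine ⟨x * y, fun hxy ↦ hx ?_, fun hxy ↦ hy ?_⟩
      · simpa using H.mul_mem hxy (H.inv_mem hyH)
      · simpa using K.mul_mem (K.inv_mem hxK) hxy
    · exact ⟨y, hyH, hy⟩
  · exact ⟨x, hx, hxK⟩

theorem exists_forall_notMem_of_card_le_two {ι : Type*} {s : Finset ι} {H : ι → Subgroup G}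
    (hs : s.card ≤ 2) (hH : ∀ i ∈ s, H i ≠ ⊤) : ∃ g, ∀ i ∈ s, g ∉ H i := by
  classical
  obtain hs | hs | hs : s.card = 0 ∨ s.card = 1 ∨ s.card = 2 := by omega
  · simp [Finset.card_eq_zero.1 hs]
  · obtain ⟨i, rfl⟩ := Finset.card_eq_one.1 hs
    obtain ⟨g, hg⟩ := SetLike.exists_not_mem_of_ne_top (H i) (hH i (by simp))
    exact ⟨g, by simpa using hg⟩
  · obtain ⟨i, j, -, rfl⟩ := Finset.card_eq_two.1 hs
    obtain ⟨g, hgi, hgj⟩ := exists_notMem_notMem (hH i (by simp)) (hH j (by simp))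
    exact ⟨g, by simp [hgi, hgj]⟩

end Subgroup

namespace MulAut

variable {G : Type*} [Group G]

theorem coe_pow (σ : MulAut G) (n : ℕ) : ⇑(σ ^ n) = (⇑σ)^[n] :=
  hom_coe_pow _ rfl (fun _ _ ↦ rfl) _ _

def fixedSubgroup (σ : MulAut G) : Subgroup G :=
  MonoidHom.eqLocus σ.toMonoidHom (MonoidHom.id G)

theorem mem_fixedSubgroup {σ : MulAut G} {g : G} : g ∈ σ.fixedSubgroup ↔ σ g = g :=
  Iff.rfl

theorem fixedSubgroup_ne_top {σ : MulAut G} (hσ : σ ≠ 1) : σ.fixedSubgroup ≠ ⊤ := by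
  refine fun htop ↦ hσ (MulEquiv.ext fun g ↦ ?_)
  exact mem_fixedSubgroup.1 (htop ▸ Subgroup.mem_top g)

theorem minimalPeriod_eq_orderOf_of_forall_notMem {σ : MulAut G} (hσ : IsOfFinOrder σ) {g : G}
    (hg : ∀ p ∈ (orderOf σ).primeFactors, g ∉ (σ ^ (orderOf σ / p)).fixedSubgroup) :
    Function.minimalPeriod σ g = orderOf σ := by
  refine Function.minimalPeriod_eq_of_isPeriodicPt_and_div_prime ?_ fun p hp hpσ hper ↦ ?_
  · change (⇑σ)^[orderOf σ] g = g
    rw [← coe_pow, pow_orderOf_eq_one, one_apply]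
  · exact hg p (Nat.mem_primeFactors.2 ⟨hp, hpσ, hσ.orderOf_pos.ne'⟩)
      (mem_fixedSubgroup.2 (by rw [coe_pow]; exact hper))

end MulAut

/-- If `α` is an automorphism of finite order of a group `G` and its order is divisible by
at most two distinct primes, then `α` has a regular cycle. -/
theorem stmt9 {G : Type*} [Group G] (α : MulAut G) (hα : IsOfFinOrder α)
    (h : (orderOf α).primeFactors.card ≤ 2) :
    ∃ g : G, Function.minimalPeriod (⇑α) g = orderOf α := by
  obtain ⟨g, hg⟩ := Subgroup.exists_forall_notMem_of_card_le_two h fun p hp ↦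
    MulAut.fixedSubgroup_ne_top
      (hα.pow_orderOf_div_prime_ne_one (Nat.prime_of_mem_primeFactors hp)
        (Nat.dvd_of_mem_primeFactors hp))
  exact ⟨g, MulAut.minimalPeriod_eq_orderOf_of_forall_notMem hα hg⟩
end

section
/- Let p₁ < p₂ < p₃ be primes and k₁, k₂, k₃ positive integers, and set o := p₁^{k₁} p₂^{k₂} p₃^{k₃}. Define f(o) := 2o if p₁ = 2 and f(o) := o otherwise. Then there exists a finite supersolvable group G of order 4·f(o) admitting an automorphism α of order o that has no regular cycle (i.e., no element of G has cycle length under α equal to o). -/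
/-- A group is supersolvable if it has a normal series (all terms normal in the whole group)
whose successive factors are cyclic: each step admits an element `x` such that every element
of the step is congruent to a power of `x` modulo the previous term. -/
def IsSupersolvable (G : Type*) [Group G] : Prop :=
  ∃ (n : ℕ) (s : Fin (n + 1) → Subgroup G),
    s 0 = ⊥ ∧ s (Fin.last n) = ⊤ ∧
    (∀ i : Fin n, s i.castSucc ≤ s i.succ) ∧
    (∀ i : Fin (n + 1), (s i).Normal) ∧
    ∀ i : Fin n, ∃ x ∈ s i.succ, ∀ y ∈ s i.succ, ∃ m : ℤ, y * (x ^ m)⁻¹ ∈ s i.castSucc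

/-!
Let the Klein four-group `ℤˣ × ℤˣ` act on `N = ZMod n₁ × ZMod n₂ × ZMod n₃` (pairwise coprime
moduli) by `(s, t) ↦` multiplication by `(s, t, s * t)`, and let `α` be conjugation by the
generator `1` of `N` in `N ⋊ (ℤˣ × ℤˣ)`. Then `α (x, v) = (x + (1 - v), v)`, so the `α`-orbit of
`(x, v)` has the additive order of `1 - v` as its length; each coordinate of `1 - v` is `0` or `2`.
Since one of `s`, `t`, `s * t` is always `1`, every orbit length divides the product of just two
of the orders `aᵢ` of `2` in `ZMod nᵢ`, while the orbits of `(0, (-1, -1))` and `(0, (1, -1))`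
force `orderOf α = a₁ * a₂ * a₃`. The group is supersolvable because `N` and both factors `ℤˣ`
are cyclic, and `nᵢ = pᵢ ^ kᵢ` (doubled for `p₁ = 2`) gives `aᵢ = pᵢ ^ kᵢ`.
-/

open Function SemidirectProduct

theorem Nat.lcm_lcm_dvd_mul_mul (x y z : ℕ) : x.lcm (y.lcm z) ∣ x * y * z := by
  rw [mul_assoc]
  exact (Nat.lcm_dvd_mul _ _).trans (Nat.mul_dvd_mul_left x (Nat.lcm_dvd_mul y z))

theorem Nat.mul_mul_lt_mul_mul_of_dvd {x₁ x₂ x₃ a b c : ℕ} (h₁ : x₁ ∣ a) (h₂ : x₂ ∣ b)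
    (h₃ : x₃ ∣ c) (ha : 1 < a) (hb : 1 < b) (hc : 1 < c) (h : x₁ = 1 ∨ x₂ = 1 ∨ x₃ = 1) :
    x₁ * x₂ * x₃ < a * b * c := by
  have le₁ := Nat.le_of_dvd (by omega) h₁
  have le₂ := Nat.le_of_dvd (by omega) h₂
  have le₃ := Nat.le_of_dvd (by omega) h₃
  rcases h with rfl | rfl | rfl
  · nlinarith [Nat.mul_le_mul le₂ le₃, Nat.mul_le_mul ha.le (Nat.mul_le_mul hb.le hc.le)]
  · nlinarith [Nat.mul_le_mul le₁ le₃, Nat.mul_le_mul hb.le (Nat.mul_le_mul ha.le hc.le)]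
  · nlinarith [Nat.mul_le_mul le₁ le₂, Nat.mul_le_mul hc.le (Nat.mul_le_mul ha.le hb.le)]

theorem MulAut.coe_pow_s10 {G : Type*} [Group G] (f : MulAut G) (k : ℕ) : ⇑(f ^ k) = (⇑f)^[k] := by
  induction k with
  | zero => rfl
  | succ k ih => rw [pow_succ, iterate_succ, ← ih]; rfl

theorem MulAut.orderOf_dvd_iff_forall_minimalPeriod_dvd {G : Type*} [Group G] (f : MulAut G)
    (k : ℕ) : orderOf f ∣ k ↔ ∀ g, minimalPeriod f g ∣ k := by
  simp only [orderOf_dvd_iff_pow_eq_one, ← isPeriodicPt_iff_minimalPeriod_dvd, IsPeriodicPt,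
    IsFixedPt, MulEquiv.ext_iff, MulAut.one_apply, MulAut.coe_pow_s10]

theorem MulAut.minimalPeriod_dvd_orderOf {G : Type*} [Group G] (f : MulAut G) (g : G) :
    minimalPeriod f g ∣ orderOf f :=
  (f.orderOf_dvd_iff_forall_minimalPeriod_dvd _).mp dvd_rfl g

theorem MonoidHom.exists_forall_zpow_mul_inv_mem_ker {G H : Type*} [Group G] [Group H]
    (f : G →* H) {T : Subgroup G} {x : G} (hx : x ∈ T)
    (hT : ∀ y ∈ T, f y ∈ Subgroup.zpowers (f x)) :
    ∃ x ∈ T, ∀ y ∈ T, ∃ m : ℤ, y * (x ^ m)⁻¹ ∈ f.ker := by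
  refine ⟨x, hx, fun y hy => ?_⟩
  obtain ⟨m, hm⟩ := Subgroup.mem_zpowers_iff.mp (hT y hy)
  exact ⟨m, by rw [MonoidHom.mem_ker, map_mul, map_inv, map_zpow, hm, mul_inv_cancel]⟩

namespace SemidirectProduct

section Fintype

variable {N K : Type*} [Group N] [Group K] [Fintype N] [Fintype K] {φ : K →* MulAut N}

instance : Fintype (N ⋊[φ] K) := Fintype.ofEquiv _ equivProd.symm

theorem card_eq_mul : Fintype.card (N ⋊[φ] K) = Fintype.card N * Fintype.card K := by
  rw [Fintype.card_congr equivProd, Fintype.card_prod]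

end Fintype

theorem isSupersolvable_prod {N K₁ K₂ : Type*} [Group N] [Group K₁] [Group K₂]
    [IsCyclic N] [IsCyclic K₁] [IsCyclic K₂] (φ : K₁ × K₂ →* MulAut N) :
    IsSupersolvable (N ⋊[φ] (K₁ × K₂)) := by
  obtain ⟨n, hn⟩ := IsCyclic.exists_generator (α := N)
  obtain ⟨k₁, hk₁⟩ := IsCyclic.exists_generator (α := K₁)
  obtain ⟨k₂, hk₂⟩ := IsCyclic.exists_generator (α := K₂)
  let π₂ : N ⋊[φ] (K₁ × K₂) →* K₂ := (MonoidHom.snd K₁ K₂).comp rightHom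
  -- The series `1 ≤ N ≤ N ⋊ K₁ ≤ N ⋊ (K₁ × K₂)`, each proper term written as a kernel.
  refine ⟨3, ![(MonoidHom.id _).ker, rightHom.ker, π₂.ker, ⊤], MonoidHom.ker_id, rfl,
    ?_, ?_, ?_⟩
  · intro i
    fin_cases i
    · exact bot_le
    · intro g hg
      simp_all [π₂]
    · exact le_top
  · intro i
    fin_cases i <;> dsimp <;> infer_instance
  · intro i
    fin_cases i
    · refine (MonoidHom.id _).exists_forall_zpow_mul_inv_mem_ker (x := inl n) (by simp) ?_
      intro y (hy : y.right = 1)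
      obtain ⟨m, hm⟩ := Subgroup.mem_zpowers_iff.mp (hn y.left)
      refine Subgroup.mem_zpowers_iff.mpr ⟨m, ?_⟩
      rw [MonoidHom.id_apply, MonoidHom.id_apply, ← map_zpow, hm]
      ext <;> simp [hy]
    · refine rightHom.exists_forall_zpow_mul_inv_mem_ker (x := inr (k₁, 1)) (by simp [π₂]) ?_
      intro y hy
      obtain ⟨m, hm⟩ := Subgroup.mem_zpowers_iff.mp (hk₁ y.right.1)
      refine Subgroup.mem_zpowers_iff.mpr ⟨m, ?_⟩
      rw [rightHom_inr, rightHom_eq_right]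
      ext <;> simp_all [π₂]
    · exact π₂.exists_forall_zpow_mul_inv_mem_ker (x := inr (1, k₂)) trivial
        fun y _ => by simpa [π₂] using hk₂ y.right.2

section Conj

variable {N K : Type*} [CommGroup N] [Group K] {φ : K →* MulAut N}

theorem conj_inl_apply (n : N) (g : N ⋊[φ] K) :
    MulAut.conj (inl n) g = ⟨g.left * (n / φ g.right n), g.right⟩ := by
  ext
  · simp only [MulAut.conj_apply, mul_left, inv_left, left_inl, right_inl, mul_right, inv_one,
      map_one, MulAut.one_apply, map_inv, div_eq_mul_inv]
    ac_rfl
  · simp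

theorem iterate_conj_inl (n : N) (g : N ⋊[φ] K) (k : ℕ) :
    (MulAut.conj (inl n))^[k] g = ⟨g.left * (n / φ g.right n) ^ k, g.right⟩ := by
  rw [← MulAut.coe_pow_s10, ← map_pow, ← map_pow, conj_inl_apply, map_pow, div_pow]

theorem minimalPeriod_conj_inl (n : N) (g : N ⋊[φ] K) :
    minimalPeriod (MulAut.conj (inl n)) g = orderOf (n / φ g.right n) := by
  refine Nat.dvd_right_iff_eq.mp fun k => ?_
  rw [← isPeriodicPt_iff_minimalPeriod_dvd, orderOf_dvd_iff_pow_eq_one, IsPeriodicPt, IsFixedPt,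
    iterate_conj_inl, SemidirectProduct.ext_iff]
  simp

end Conj

end SemidirectProduct

def unitsMulAut (R : Type*) [Ring R] : Rˣ →* MulAut (Multiplicative R) where
  toFun u := (DistribMulAction.toAddEquiv R u).toMultiplicative
  map_one' := by ext; simp
  map_mul' u v := by ext; simp [mul_smul]

theorem unitsMulAut_apply {R : Type*} [Ring R] (u : Rˣ) (x : R) :
    unitsMulAut R u (Multiplicative.ofAdd x) = Multiplicative.ofAdd ((u : R) * x) := rfl

theorem minimalPeriod_conj_inl_ofAdd_one {R K : Type*} [Ring R] [Group K] (χ : K →* Rˣ)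
    (g : Multiplicative R ⋊[(unitsMulAut R).comp χ] K) :
    minimalPeriod (MulAut.conj (inl (Multiplicative.ofAdd 1))) g =
      addOrderOf (1 - (χ g.right : R)) := by
  rw [minimalPeriod_conj_inl, MonoidHom.comp_apply, unitsMulAut_apply, mul_one, ← ofAdd_sub,
    orderOf_ofAdd_eq_addOrderOf]

theorem addOrderOf_one_sub_intCast_units_dvd {R : Type*} [Ring R] (s : ℤˣ) :
    addOrderOf (1 - ((s : ℤ) : R)) ∣ addOrderOf (2 : R) := by
  rcases Int.units_eq_one_or s with rfl | rfl <;> simp [one_add_one_eq_two]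

theorem addOrderOf_one_sub_intCast_neg_one {R : Type*} [Ring R] :
    addOrderOf (1 - (((-1 : ℤˣ) : ℤ) : R)) = addOrderOf (2 : R) := by
  simp [one_add_one_eq_two]

theorem ZMod.addOrderOf_two_dvd (n : ℕ) [NeZero n] : addOrderOf (2 : ZMod n) ∣ n := by
  simpa only [ZMod.card] using addOrderOf_dvd_card (x := (2 : ZMod n))

theorem ZMod.addOrderOf_two_of_odd {n : ℕ} (hn : Odd n) : addOrderOf (2 : ZMod n) = n := by
  rw [← Nat.cast_ofNat, ZMod.addOrderOf_coe' n two_ne_zero,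
    (Nat.coprime_two_right.mpr hn).gcd_eq_one, Nat.div_one]

theorem ZMod.addOrderOf_two_two_mul (m : ℕ) : addOrderOf (2 : ZMod (2 * m)) = m := by
  have h := ZMod.addOrderOf_coe' (2 * m) two_ne_zero
  rw [Nat.cast_ofNat, Nat.gcd_mul_right_left] at h
  omega

theorem isAddCyclic_zmod_prod {n₁ n₂ n₃ : ℕ} (h₁₂ : n₁.Coprime n₂) (h₁₃ : n₁.Coprime n₃)
    (h₂₃ : n₂.Coprime n₃) : IsAddCyclic (ZMod n₁ × ZMod n₂ × ZMod n₃) := by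
  simp only [AddGroup.isAddCyclic_prod_iff, Nat.card_prod, Nat.card_zmod]
  exact ⟨inferInstance, ⟨inferInstance, inferInstance, h₂₃⟩, Nat.Coprime.mul_right h₁₂ h₁₃⟩

def signChar (n₁ n₂ n₃ : ℕ) : ℤˣ × ℤˣ →* (ZMod n₁ × ZMod n₂ × ZMod n₃)ˣ :=
  let ι (n : ℕ) : ℤˣ →* (ZMod n)ˣ := Units.map (Int.castRingHom _).toMonoidHom
  MulEquiv.prodUnits.symm.toMonoidHom.comp <| ((ι n₁).comp (.fst _ _)).prod <|
    MulEquiv.prodUnits.symm.toMonoidHom.comp <|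
      ((ι n₂).comp (.snd _ _)).prod ((ι n₃).comp (.fst _ _ * .snd _ _))

theorem coe_signChar (n₁ n₂ n₃ : ℕ) (s t : ℤˣ) :
    (signChar n₁ n₂ n₃ (s, t) : ZMod n₁ × ZMod n₂ × ZMod n₃) =
      (((s : ℤ) : ZMod n₁), ((t : ℤ) : ZMod n₂), (((s * t : ℤˣ) : ℤ) : ZMod n₃)) :=
  rfl

abbrev SignGroup (n₁ n₂ n₃ : ℕ) : Type :=
  Multiplicative (ZMod n₁ × ZMod n₂ × ZMod n₃) ⋊[(unitsMulAut _).comp (signChar n₁ n₂ n₃)]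
    (ℤˣ × ℤˣ)

namespace SignGroup

def translation (n₁ n₂ n₃ : ℕ) : MulAut (SignGroup n₁ n₂ n₃) :=
  MulAut.conj (inl (Multiplicative.ofAdd 1))

variable {n₁ n₂ n₃ : ℕ}

theorem minimalPeriod_translation (x : Multiplicative (ZMod n₁ × ZMod n₂ × ZMod n₃))
    (s t : ℤˣ) :
    minimalPeriod (translation n₁ n₂ n₃) ⟨x, (s, t)⟩ =
      (addOrderOf (1 - ((s : ℤ) : ZMod n₁))).lcm ((addOrderOf (1 - ((t : ℤ) : ZMod n₂))).lcm
        (addOrderOf (1 - (((s * t : ℤˣ) : ℤ) : ZMod n₃)))) := by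
  rw [translation, minimalPeriod_conj_inl_ofAdd_one, coe_signChar, Prod.addOrderOf,
    Prod.addOrderOf]
  rfl

variable {a b c : ℕ}

theorem minimalPeriod_translation_dvd (ha : addOrderOf (2 : ZMod n₁) = a)
    (hb : addOrderOf (2 : ZMod n₂) = b) (hc : addOrderOf (2 : ZMod n₃) = c)
    (g : SignGroup n₁ n₂ n₃) :
    minimalPeriod (translation n₁ n₂ n₃) g ∣ a * b * c := by
  obtain ⟨x, s, t⟩ := g
  rw [minimalPeriod_translation]
  subst ha hb hc
  exact (Nat.lcm_lcm_dvd_mul_mul _ _ _).trans <| Nat.mul_dvd_mul (Nat.mul_dvd_mul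
    (addOrderOf_one_sub_intCast_units_dvd s) (addOrderOf_one_sub_intCast_units_dvd t))
      (addOrderOf_one_sub_intCast_units_dvd _)

theorem orderOf_translation (ha : addOrderOf (2 : ZMod n₁) = a)
    (hb : addOrderOf (2 : ZMod n₂) = b) (hc : addOrderOf (2 : ZMod n₃) = c)
    (hab : a.Coprime b) (hac : a.Coprime c) (hbc : b.Coprime c) :
    orderOf (translation n₁ n₂ n₃) = a * b * c := by
  refine Nat.dvd_antisymm ((MulAut.orderOf_dvd_iff_forall_minimalPeriod_dvd _ _).mpr
    (minimalPeriod_translation_dvd ha hb hc)) ?_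
  have hab_dvd := (translation n₁ n₂ n₃).minimalPeriod_dvd_orderOf ⟨1, (-1, -1)⟩
  have hbc_dvd := (translation n₁ n₂ n₃).minimalPeriod_dvd_orderOf ⟨1, (1, -1)⟩
  simp only [minimalPeriod_translation, mul_neg, mul_one, neg_neg,
    addOrderOf_one_sub_intCast_neg_one, Units.val_one, Int.cast_one, sub_self, addOrderOf_zero,
    Nat.lcm_one_right, Nat.lcm_one_left, ha, hb, hc, hab.lcm_eq_mul] at hab_dvd hbc_dvd
  exact (Nat.Coprime.mul_left hac hbc).mul_dvd_of_dvd_of_dvd hab_dvd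
    ((Nat.dvd_lcm_right b c).trans hbc_dvd)

theorem minimalPeriod_translation_ne (ha : addOrderOf (2 : ZMod n₁) = a)
    (hb : addOrderOf (2 : ZMod n₂) = b) (hc : addOrderOf (2 : ZMod n₃) = c)
    (ha₁ : 1 < a) (hb₁ : 1 < b) (hc₁ : 1 < c)
    (g : SignGroup n₁ n₂ n₃) : minimalPeriod (translation n₁ n₂ n₃) g ≠ a * b * c := by
  obtain ⟨x, s, t⟩ := g
  have hs := addOrderOf_one_sub_intCast_units_dvd (R := ZMod n₁) s
  have ht := addOrderOf_one_sub_intCast_units_dvd (R := ZMod n₂) t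
  have hst := addOrderOf_one_sub_intCast_units_dvd (R := ZMod n₃) (s * t)
  rw [ha] at hs
  rw [hb] at ht
  rw [hc] at hst
  have h_one : s = 1 ∨ t = 1 ∨ s * t = 1 := by
    rcases Int.units_eq_one_or s with rfl | rfl <;> rcases Int.units_eq_one_or t with rfl | rfl <;>
      simp
  have hpos : 0 < addOrderOf (1 - ((s : ℤ) : ZMod n₁)) * addOrderOf (1 - ((t : ℤ) : ZMod n₂)) *
      addOrderOf (1 - (((s * t : ℤˣ) : ℤ) : ZMod n₃)) := by
    have := Nat.pos_of_dvd_of_pos hs (by omega)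
    have := Nat.pos_of_dvd_of_pos ht (by omega)
    have := Nat.pos_of_dvd_of_pos hst (by omega)
    positivity
  rw [minimalPeriod_translation]
  refine ((Nat.le_of_dvd hpos (Nat.lcm_lcm_dvd_mul_mul _ _ _)).trans_lt ?_).ne
  refine Nat.mul_mul_lt_mul_mul_of_dvd hs ht hst ha₁ hb₁ hc₁ ?_
  rcases h_one with h | h | h <;> simp [h]

theorem isSupersolvable (h₁₂ : n₁.Coprime n₂) (h₁₃ : n₁.Coprime n₃) (h₂₃ : n₂.Coprime n₃) :
    IsSupersolvable (SignGroup n₁ n₂ n₃) :=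
  have := isAddCyclic_zmod_prod h₁₂ h₁₃ h₂₃
  isSupersolvable_prod _

theorem card [NeZero n₁] [NeZero n₂] [NeZero n₃] :
    Fintype.card (SignGroup n₁ n₂ n₃) = 4 * (n₁ * n₂ * n₃) := by
  rw [card_eq_mul, Fintype.card_multiplicative, Fintype.card_prod, Fintype.card_prod,
    Fintype.card_prod, Fintype.card_units_int, ZMod.card, ZMod.card, ZMod.card]
  ring

end SignGroup

theorem exists_supersolvable_mulAut_forall_minimalPeriod_ne {n₁ n₂ n₃ a b c : ℕ}
    [NeZero n₁] [NeZero n₂] [NeZero n₃]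
    (h₁₂ : n₁.Coprime n₂) (h₁₃ : n₁.Coprime n₃) (h₂₃ : n₂.Coprime n₃)
    (ha : addOrderOf (2 : ZMod n₁) = a) (hb : addOrderOf (2 : ZMod n₂) = b)
    (hc : addOrderOf (2 : ZMod n₃) = c) (ha₁ : 1 < a) (hb₁ : 1 < b) (hc₁ : 1 < c) :
    ∃ (G : Type) (_ : Group G) (_ : Fintype G),
      IsSupersolvable G ∧ Fintype.card G = 4 * (n₁ * n₂ * n₃) ∧
      ∃ α : MulAut G, orderOf α = a * b * c ∧ ∀ g : G, minimalPeriod α g ≠ a * b * c := by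
  have ha' := ha ▸ ZMod.addOrderOf_two_dvd n₁
  have hb' := hb ▸ ZMod.addOrderOf_two_dvd n₂
  have hc' := hc ▸ ZMod.addOrderOf_two_dvd n₃
  refine ⟨SignGroup n₁ n₂ n₃, inferInstance, inferInstance, SignGroup.isSupersolvable h₁₂ h₁₃ h₂₃,
    SignGroup.card, SignGroup.translation n₁ n₂ n₃, ?_,
    SignGroup.minimalPeriod_translation_ne ha hb hc ha₁ hb₁ hc₁⟩
  exact SignGroup.orderOf_translation ha hb hc (h₁₂.of_dvd ha' hb') (h₁₃.of_dvd ha' hc')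
    (h₂₃.of_dvd hb' hc')

/-- For primes `p₁ < p₂ < p₃` and positive integers `k₁, k₂, k₃`, with
`o = p₁^{k₁} p₂^{k₂} p₃^{k₃}` and `f(o) = 2o` if `p₁ = 2` and `f(o) = o` otherwise,
there is a finite supersolvable group of order `4·f(o)` with an automorphism of order `o`
having no regular cycle. -/
theorem stmt10 (p₁ p₂ p₃ : ℕ) (hp₁ : p₁.Prime) (hp₂ : p₂.Prime) (hp₃ : p₃.Prime)
    (h12 : p₁ < p₂) (h23 : p₂ < p₃)
    (k₁ k₂ k₃ : ℕ) (hk₁ : 0 < k₁) (hk₂ : 0 < k₂) (hk₃ : 0 < k₃) :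
    ∃ (G : Type) (_ : Group G) (_ : Fintype G),
      IsSupersolvable G ∧
      Fintype.card G =
        4 * (if p₁ = 2 then 2 * (p₁ ^ k₁ * p₂ ^ k₂ * p₃ ^ k₃)
             else p₁ ^ k₁ * p₂ ^ k₂ * p₃ ^ k₃) ∧
      ∃ α : MulAut G, orderOf α = p₁ ^ k₁ * p₂ ^ k₂ * p₃ ^ k₃ ∧
        ∀ g : G, Function.minimalPeriod (⇑α) g ≠ p₁ ^ k₁ * p₂ ^ k₂ * p₃ ^ k₃ := by
  have hodd : ∀ {q : ℕ} (l : ℕ), q.Prime → p₁ < q → Odd (q ^ l) := fun _ hq hpq =>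
    (hq.odd_of_ne_two (by linarith [hp₁.two_le])).pow
  -- Doubling the modulus when `p₁ = 2` is what makes `2` have additive order `p₁ ^ k₁`.
  obtain ⟨n₁, hn₁⟩ : ∃ n₁, n₁ = if p₁ = 2 then 2 * p₁ ^ k₁ else p₁ ^ k₁ := ⟨_, rfl⟩
  have ha : addOrderOf (2 : ZMod n₁) = p₁ ^ k₁ := by
    by_cases h : p₁ = 2
    · rw [hn₁, if_pos h, ZMod.addOrderOf_two_two_mul]
    · rw [hn₁, if_neg h, ZMod.addOrderOf_two_of_odd (hp₁.odd_of_ne_two h).pow]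
  have hn₁_coprime : ∀ {q : ℕ} (l : ℕ), q.Prime → p₁ < q → n₁.Coprime (q ^ l) := fun l hq hpq =>
    Nat.Coprime.coprime_dvd_left (k := 2 * p₁ ^ k₁) (by rw [hn₁]; split_ifs <;> simp) <|
      (Nat.coprime_two_left.mpr (hodd l hq hpq)).mul_left (Nat.coprime_pow_primes _ _ hp₁ hq hpq.ne)
  have : NeZero n₁ := ⟨by rw [hn₁]; split_ifs <;> simp [hp₁.ne_zero]⟩
  have : NeZero p₂ := ⟨hp₂.ne_zero⟩
  have : NeZero p₃ := ⟨hp₃.ne_zero⟩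
  obtain ⟨G, _, _, hG, hcard, α, hα, hreg⟩ := exists_supersolvable_mulAut_forall_minimalPeriod_ne
    (hn₁_coprime k₂ hp₂ h12) (hn₁_coprime k₃ hp₃ (h12.trans h23))
    (Nat.coprime_pow_primes _ _ hp₂ hp₃ h23.ne) ha
    (ZMod.addOrderOf_two_of_odd (hodd k₂ hp₂ h12))
    (ZMod.addOrderOf_two_of_odd (hodd k₃ hp₃ (h12.trans h23)))
    (Nat.one_lt_pow hk₁.ne' hp₁.one_lt) (Nat.one_lt_pow hk₂.ne' hp₂.one_lt)
    (Nat.one_lt_pow hk₃.ne' hp₃.one_lt)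
  refine ⟨G, _, _, hG, hcard.trans ?_, α, hα, hreg⟩
  rw [hn₁]
  split_ifs <;> ring
end

section
/- Let o be a positive integer divisible by at least three distinct primes. Then there exists a finite supersolvable group G and an automorphism α of G of order exactly o such that α has no regular cycle, i.e., no element of G has cycle length under α equal to o. -/
/-!
Write `o = Q₁ Q₂ Q₃` with pairwise coprime factors `Qᵢ > 1`, and let `E` be the subgroup of
`D_{2Q₁} × D_{2Q₂} × D_{2Q₃}` of triples containing an even number of reflections. `E` is
supersolvable: rotations, one factor at a time, then two steps of index 2. Conjugation by
`ρ = (r, r, r) ∈ E` has order `o`, because `rⁿ` centralises `D_{2Q}` exactly when `Q ∣ n`.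
But every element of `E` has a rotation in some coordinate `i`, which `ρ` centralises; so the
element is fixed by conjugation by `ρ^(o / Qᵢ)`, and its cycle is shorter than `o`.
-/

namespace Nat

theorem exists_coprime_mul_eq_of_mem_primeFactors {n p : ℕ} (hn : n ≠ 0)
    (hp : p ∈ n.primeFactors) :
    ∃ a b, 1 < a ∧ a.Coprime b ∧ a * b = n ∧ n.primeFactors.card = b.primeFactors.card + 1 := by
  have hpp := prime_of_mem_primeFactors hp
  obtain ⟨e, b, hpb, rfl⟩ := exists_eq_pow_mul_and_not_dvd hn p hpp.ne_one
  have he : e ≠ 0 := by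
    rintro rfl
    exact hpb (by simpa using dvd_of_mem_primeFactors hp)
  refine ⟨p ^ e, b, one_lt_pow he hpp.one_lt, (hpp.coprime_iff_not_dvd.2 hpb).pow_left e, rfl, ?_⟩
  rw [primeFactors_mul (pow_ne_zero e hpp.ne_zero) (right_ne_zero_of_mul hn),
    primeFactors_prime_pow he hpp, ← Finset.insert_eq,
    Finset.card_insert_of_notMem (fun h => hpb (dvd_of_mem_primeFactors h))]

theorem exists_coprime_mul_eq_of_three_le_card_primeFactors {n : ℕ}
    (h : 3 ≤ n.primeFactors.card) :
    ∃ a b c, 1 < a ∧ 1 < b ∧ 1 < c ∧ a.Coprime b ∧ (a * b).Coprime c ∧ a * b * c = n := by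
  have hn : n ≠ 0 := by
    rintro rfl
    simp at h
  obtain ⟨p, hp⟩ := Finset.card_pos.1 (by omega : 0 < n.primeFactors.card)
  obtain ⟨a, m, ha, ham, rfl, hcard⟩ := exists_coprime_mul_eq_of_mem_primeFactors hn hp
  have hm : m ≠ 0 := right_ne_zero_of_mul hn
  obtain ⟨q, hq⟩ := Finset.card_pos.1 (by omega : 0 < m.primeFactors.card)
  obtain ⟨b, c, hb, hbc, rfl, hcard'⟩ := exists_coprime_mul_eq_of_mem_primeFactors hm hq
  have hc : 1 < c := by
    have : c ≠ 0 := right_ne_zero_of_mul hm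
    have : c ≠ 1 := by
      rintro rfl
      rw [primeFactors_one, Finset.card_empty] at hcard'
      omega
    omega
  obtain ⟨hab, hac⟩ := coprime_mul_iff_right.1 ham
  exact ⟨a, b, c, ha, hb, hc, hab, hac.mul_left hbc, mul_assoc a b c⟩

end Nat

theorem ZMod.two_mul_natCast_eq_zero_iff (Q n : ℕ) : 2 * (n : ZMod (2 * Q)) = 0 ↔ Q ∣ n := by
  rw [show (2 * n : ZMod (2 * Q)) = (2 * n : ℕ) by push_cast; rfl, ZMod.natCast_eq_zero_iff,
    Nat.mul_dvd_mul_iff_left two_pos]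

theorem exists_zpow_mul_inv_mem_of_monoidHom {G K : Type*} [Group G] [Group K]
    {S T : Subgroup G} (f : G →* K) {x : G} (hx : x ∈ S) (hker : ∀ y ∈ S, f y = 1 → y ∈ T)
    (hgen : ∀ y ∈ S, f y ∈ Subgroup.zpowers (f x)) :
    ∃ x ∈ S, ∀ y ∈ S, ∃ m : ℤ, y * (x ^ m)⁻¹ ∈ T := by
  refine ⟨x, hx, fun y hy => ?_⟩
  obtain ⟨m, hm⟩ := Subgroup.mem_zpowers_iff.1 (hgen y hy)
  exact ⟨m, hker _ (S.mul_mem hy (S.inv_mem (S.zpow_mem hx m))) (by simp [hm])⟩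

theorem MulAut.minimalPeriod_dvd_iff {M : Type*} [Monoid M] (e : MulAut M) (x : M) (n : ℕ) :
    Function.minimalPeriod e x ∣ n ↔ (e ^ n) x = x :=
  (MulAction.pow_smul_eq_iff_period_dvd (m := e)).symm

namespace DihedralGroup

variable {N : ℕ}

def parity : DihedralGroup N →* Multiplicative (ZMod 2) where
  toFun
    | r _ => 1
    | sr _ => Multiplicative.ofAdd 1
  map_one' := rfl
  map_mul' := by
    rintro (i | i) (j | j) <;> simp only [r_mul_r, r_mul_sr, sr_mul_r, sr_mul_sr] <;> rfl

@[simp] theorem parity_r (i : ZMod N) : parity (r i) = 1 := rfl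

@[simp] theorem parity_sr (i : ZMod N) : parity (sr i) = Multiplicative.ofAdd 1 := rfl

theorem mem_zpowers_r_one_of_parity_eq_one {d : DihedralGroup N} (hd : parity d = 1) :
    d ∈ Subgroup.zpowers (r 1) := by
  rcases d with i | i
  · exact ⟨(i.cast : ℤ), by simp⟩
  · exact absurd hd (by simp only [parity_sr]; decide)

theorem parity_mem_zpowers_parity_sr (d : DihedralGroup N) (i : ZMod N) :
    parity d ∈ Subgroup.zpowers (parity (sr i)) := by
  rcases d with j | j
  · exact Subgroup.one_mem _
  · exact Subgroup.mem_zpowers _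

theorem commute_r_r (i j : ZMod N) : Commute (r i) (r j) := by
  rw [commute_iff_eq, r_mul_r, r_mul_r, add_comm]

theorem commute_r_sr_iff (i j : ZMod N) : Commute (r i) (sr j) ↔ 2 * i = 0 := by
  rw [commute_iff_eq, r_mul_sr, sr_mul_r, sr.injEq]
  constructor <;> intro h <;> linear_combination -h

theorem commute_r_of_two_mul_eq_zero {i : ZMod N} (hi : 2 * i = 0) :
    ∀ d : DihedralGroup N, Commute (r i) d
  | r j => commute_r_r i j
  | sr j => (commute_r_sr_iff i j).2 hi

end DihedralGroup

open DihedralGroup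

section EvenTriples

abbrev DihedralTriple (N₁ N₂ N₃ : ℕ) := DihedralGroup N₁ × DihedralGroup N₂ × DihedralGroup N₃

variable (N₁ N₂ N₃ : ℕ)

def evenTriples : Subgroup (DihedralTriple N₁ N₂ N₃) :=
  (parity.coprod (parity.coprod parity)).ker

variable {N₁ N₂ N₃} in
theorem mem_evenTriples {x : DihedralTriple N₁ N₂ N₃} :
    x ∈ evenTriples N₁ N₂ N₃ ↔ parity x.1 * (parity x.2.1 * parity x.2.2) = 1 :=
  Iff.rfl

variable {N₁ N₂ N₃} in
theorem exists_r_of_mem_evenTriples {x : DihedralTriple N₁ N₂ N₃}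
    (hx : x ∈ evenTriples N₁ N₂ N₃) :
    (∃ i, x.1 = r i) ∨ (∃ i, x.2.1 = r i) ∨ (∃ i, x.2.2 = r i) := by
  obtain ⟨a | a, b | b, c | c⟩ := x <;> simp only [r.injEq, exists_eq', true_or, or_true]
  exact absurd hx (by simp only [mem_evenTriples, parity_sr]; decide)

def evenTriplesSeries : Fin 6 → Subgroup (evenTriples N₁ N₂ N₃) :=
  ![⊥, (parity.ker.prod (Subgroup.prod ⊥ ⊥)).subgroupOf _,
    (parity.ker.prod (parity.ker.prod ⊥)).subgroupOf _,
    (parity.ker.prod (parity.ker.prod parity.ker)).subgroupOf _,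
    (Subgroup.prod ⊤ (Subgroup.prod ⊤ parity.ker)).subgroupOf _, ⊤]

theorem exists_zpow_mul_inv_mem_evenTriplesSeries (i : Fin 5) :
    ∃ x ∈ evenTriplesSeries N₁ N₂ N₃ i.succ, ∀ y ∈ evenTriplesSeries N₁ N₂ N₃ i.succ,
      ∃ m : ℤ, y * (x ^ m)⁻¹ ∈ evenTriplesSeries N₁ N₂ N₃ i.castSucc := by
  let E := evenTriples N₁ N₂ N₃
  fin_cases i
  · refine exists_zpow_mul_inv_mem_of_monoidHom ((MonoidHom.fst _ _).comp E.subtype)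
      (x := ⟨(r 1, 1, 1), by simp [mem_evenTriples]⟩) ?_ ?_ ?_ <;>
    simp +contextual [evenTriplesSeries, Subgroup.mem_subgroupOf, Subgroup.mem_prod, Prod.ext_iff,
      mem_zpowers_r_one_of_parity_eq_one]
  · refine exists_zpow_mul_inv_mem_of_monoidHom
      ((MonoidHom.fst _ _).comp ((MonoidHom.snd _ _).comp E.subtype))
      (x := ⟨(1, r 1, 1), by simp [mem_evenTriples]⟩) ?_ ?_ ?_ <;>
    simp +contextual [evenTriplesSeries, Subgroup.mem_subgroupOf, Subgroup.mem_prod,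
      mem_zpowers_r_one_of_parity_eq_one]
  · refine exists_zpow_mul_inv_mem_of_monoidHom
      ((MonoidHom.snd _ _).comp ((MonoidHom.snd _ _).comp E.subtype))
      (x := ⟨(1, 1, r 1), by simp [mem_evenTriples]⟩) ?_ ?_ ?_ <;>
    simp +contextual [evenTriplesSeries, Subgroup.mem_subgroupOf, Subgroup.mem_prod,
      mem_zpowers_r_one_of_parity_eq_one]
  · refine exists_zpow_mul_inv_mem_of_monoidHom
      (parity.comp ((MonoidHom.fst _ _).comp E.subtype))
      (x := ⟨(sr 0, sr 0, 1), by simp [mem_evenTriples]; decide⟩) ?_ ?_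
      (fun y _ => parity_mem_zpowers_parity_sr _ 0)
    · simp [evenTriplesSeries, Subgroup.mem_subgroupOf, Subgroup.mem_prod]
    · intro y hy h₁
      simp [evenTriplesSeries, Subgroup.mem_subgroupOf, Subgroup.mem_prod] at hy h₁ ⊢
      simpa [h₁, hy] using mem_evenTriples.1 y.2
  · refine exists_zpow_mul_inv_mem_of_monoidHom
      (parity.comp ((MonoidHom.snd _ _).comp ((MonoidHom.snd _ _).comp E.subtype)))
      (x := ⟨(1, sr 0, sr 0), by simp [mem_evenTriples]; decide⟩) (Subgroup.mem_top _) ?_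
      (fun y _ => parity_mem_zpowers_parity_sr _ 0)
    simp [evenTriplesSeries, Subgroup.mem_subgroupOf, Subgroup.mem_prod]

theorem isSupersolvable_evenTriples : IsSupersolvable (evenTriples N₁ N₂ N₃) := by
  refine ⟨5, evenTriplesSeries N₁ N₂ N₃, rfl, rfl, fun i => ?_, fun i => ?_,
    exists_zpow_mul_inv_mem_evenTriplesSeries N₁ N₂ N₃⟩
  · fin_cases i <;> intro x <;>
      simp +contextual [evenTriplesSeries, Subgroup.mem_subgroupOf, Subgroup.mem_prod]
  · fin_cases i <;> simp [evenTriplesSeries] <;> infer_instance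

def diagRot : evenTriples N₁ N₂ N₃ :=
  ⟨(r 1, r 1, r 1), by simp [mem_evenTriples]⟩

theorem coe_diagRot_pow (n : ℕ) :
    ((diagRot N₁ N₂ N₃ ^ n : evenTriples N₁ N₂ N₃) : DihedralTriple N₁ N₂ N₃) =
      (r n, r n, r n) := by
  simp [diagRot]

theorem conj_diagRot_pow_apply_eq_self_iff (n : ℕ) (x : evenTriples N₁ N₂ N₃) :
    (MulAut.conj (diagRot N₁ N₂ N₃) ^ n) x = x ↔
      Commute (r n) (x : DihedralTriple N₁ N₂ N₃).1 ∧
      Commute (r n) (x : DihedralTriple N₁ N₂ N₃).2.1 ∧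
      Commute (r n) (x : DihedralTriple N₁ N₂ N₃).2.2 := by
  rw [← map_pow, MulAut.conj_apply, mul_inv_eq_iff_eq_mul, ← commute_iff_eq,
    ← Submonoid.commute_coe_coe, coe_diagRot_pow, Prod.commute_iff, Prod.commute_iff]

theorem conj_diagRot_pow_eq_one_iff (n : ℕ) :
    MulAut.conj (diagRot N₁ N₂ N₃) ^ n = 1 ↔
      2 * (n : ZMod N₁) = 0 ∧ 2 * (n : ZMod N₂) = 0 ∧ 2 * (n : ZMod N₃) = 0 := by
  constructor
  · intro h
    have fixes (x : evenTriples N₁ N₂ N₃) := (conj_diagRot_pow_apply_eq_self_iff N₁ N₂ N₃ n x).1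
      (by rw [h, MulAut.one_apply])
    obtain ⟨h₁, h₂, -⟩ := fixes ⟨(sr 0, sr 0, 1), by simp [mem_evenTriples]; decide⟩
    obtain ⟨-, -, h₃⟩ := fixes ⟨(1, sr 0, sr 0), by simp [mem_evenTriples]; decide⟩
    exact ⟨(commute_r_sr_iff _ _).1 h₁, (commute_r_sr_iff _ _).1 h₂, (commute_r_sr_iff _ _).1 h₃⟩
  · rintro ⟨h₁, h₂, h₃⟩
    ext x : 1
    exact (conj_diagRot_pow_apply_eq_self_iff N₁ N₂ N₃ n x).2 ⟨commute_r_of_two_mul_eq_zero h₁ _,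
      commute_r_of_two_mul_eq_zero h₂ _, commute_r_of_two_mul_eq_zero h₃ _⟩

end EvenTriples

section Periods

variable (Q₁ Q₂ Q₃ : ℕ)

theorem orderOf_conj_diagRot (h₁₂ : Q₁.Coprime Q₂) (h₁₂₃ : (Q₁ * Q₂).Coprime Q₃) :
    orderOf (MulAut.conj (diagRot (2 * Q₁) (2 * Q₂) (2 * Q₃))) = Q₁ * Q₂ * Q₃ := by
  have key (n : ℕ) :
      orderOf (MulAut.conj (diagRot (2 * Q₁) (2 * Q₂) (2 * Q₃))) ∣ n ↔ Q₁ * Q₂ * Q₃ ∣ n := by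
    rw [orderOf_dvd_iff_pow_eq_one, conj_diagRot_pow_eq_one_iff]
    simp only [ZMod.two_mul_natCast_eq_zero_iff]
    exact ⟨fun ⟨d₁, d₂, d₃⟩ => h₁₂₃.mul_dvd_of_dvd_of_dvd (h₁₂.mul_dvd_of_dvd_of_dvd d₁ d₂) d₃,
      fun d => ⟨(dvd_mul_right _ _).trans ((dvd_mul_right _ _).trans d),
        (dvd_mul_left _ _).trans ((dvd_mul_right _ _).trans d), (dvd_mul_left _ _).trans d⟩⟩
  exact Nat.dvd_antisymm ((key _).2 dvd_rfl) ((key _).1 dvd_rfl)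

theorem minimalPeriod_conj_diagRot_dvd (x : evenTriples (2 * Q₁) (2 * Q₂) (2 * Q₃)) :
    Function.minimalPeriod (MulAut.conj (diagRot (2 * Q₁) (2 * Q₂) (2 * Q₃))) x ∣ Q₂ * Q₃ ∨
    Function.minimalPeriod (MulAut.conj (diagRot (2 * Q₁) (2 * Q₂) (2 * Q₃))) x ∣ Q₁ * Q₃ ∨
    Function.minimalPeriod (MulAut.conj (diagRot (2 * Q₁) (2 * Q₂) (2 * Q₃))) x ∣ Q₁ * Q₂ := by
  have commute_of_dvd {Q n : ℕ} (h : Q ∣ n) (d : DihedralGroup (2 * Q)) : Commute (r n) d :=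
    commute_r_of_two_mul_eq_zero ((ZMod.two_mul_natCast_eq_zero_iff Q n).2 h) d
  simp only [MulAut.minimalPeriod_dvd_iff, conj_diagRot_pow_apply_eq_self_iff]
  rcases exists_r_of_mem_evenTriples x.2 with ⟨i, hi⟩ | ⟨i, hi⟩ | ⟨i, hi⟩
  · exact .inl ⟨hi ▸ commute_r_r _ _, commute_of_dvd (dvd_mul_right _ _) _,
      commute_of_dvd (dvd_mul_left _ _) _⟩
  · exact .inr (.inl ⟨commute_of_dvd (dvd_mul_right _ _) _, hi ▸ commute_r_r _ _,
      commute_of_dvd (dvd_mul_left _ _) _⟩)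
  · exact .inr (.inr ⟨commute_of_dvd (dvd_mul_right _ _) _, commute_of_dvd (dvd_mul_left _ _) _,
      hi ▸ commute_r_r _ _⟩)

end Periods

theorem stmt11_general (o : ℕ) (h : 3 ≤ o.primeFactors.card) :
    ∃ (G : Type) (_ : Group G) (_ : Fintype G),
      IsSupersolvable G ∧
      ∃ α : MulAut G, orderOf α = o ∧
        ∀ g : G, Function.minimalPeriod (⇑α) g ≠ o := by
  obtain ⟨Q₁, Q₂, Q₃, hQ₁, hQ₂, hQ₃, h₁₂, h₁₂₃, rfl⟩ :=
    Nat.exists_coprime_mul_eq_of_three_le_card_primeFactors h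
  have : NeZero (2 * Q₁) := ⟨by omega⟩
  have : NeZero (2 * Q₂) := ⟨by omega⟩
  have : NeZero (2 * Q₃) := ⟨by omega⟩
  refine ⟨evenTriples (2 * Q₁) (2 * Q₂) (2 * Q₃), inferInstance, Fintype.ofFinite _,
    isSupersolvable_evenTriples _ _ _, MulAut.conj (diagRot _ _ _),
    orderOf_conj_diagRot Q₁ Q₂ Q₃ h₁₂ h₁₂₃, fun x hx => ?_⟩
  rcases minimalPeriod_conj_diagRot_dvd Q₁ Q₂ Q₃ x with hd | hd | hd <;>
    have hle := Nat.le_of_dvd (by positivity) hd <;> rw [hx] at hle <;> nlinarith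

/-- If `o` is a positive integer divisible by at least three distinct primes, then there is
a finite supersolvable group with an automorphism of order exactly `o` that has no regular
cycle. -/
theorem stmt11 (o : ℕ) (ho : 0 < o) (h : 3 ≤ o.primeFactors.card) :
    ∃ (G : Type) (_ : Group G) (_ : Fintype G),
      IsSupersolvable G ∧
      ∃ α : MulAut G, orderOf α = o ∧
        ∀ g : G, Function.minimalPeriod (⇑α) g ≠ o :=
  stmt11_general o h
end

section
/- Let G be a finite group and α an automorphism of G such that some cycle of α has length strictly greater than |G|/2. Then α is fixed-point free, i.e., the only element g ∈ G with α(g) = g is the identity. -/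
/-!
Let `O` be the long orbit and `h` a fixed point of `α`. Left multiplication by `h` commutes
with `α`, so `h • O` is an orbit as large as `O`; the two meet, hence coincide, and `h` acts on
`O` as some power `α ^ k`. Since `|O| > |G| / 2`, every element of `G` is a quotient `b⁻¹ * a`
with `a, b ∈ O`, and `α ^ k (b⁻¹ * a) = (h * b)⁻¹ * (h * a) = b⁻¹ * a`. Thus `α ^ k = 1`, and
`h * g = (α ^ k) g = g` for `g ∈ O` forces `h = 1`.
-/

open MulAction Pointwise

theorem MulAction.ncard_orbit_zpowers {M X : Type*} [Group M] [MulAction M X] (a : M) (b : X)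
    [Finite (orbit (Subgroup.zpowers a) b)] :
    (orbit (Subgroup.zpowers a) b).ncard = Function.minimalPeriod (a • ·) b := by
  cases nonempty_fintype (orbit (Subgroup.zpowers a) b)
  rw [← Nat.card_coe_set_eq, Nat.card_eq_fintype_card, minimalPeriod_eq_card]

section

variable {G : Type*} [Group G] [Finite G]

theorem exists_mem_inv_mul_eq_of_card_lt {s : Set G} (hs : Nat.card G < 2 * s.ncard) (x : G) :
    ∃ a ∈ s, ∃ b ∈ s, b⁻¹ * a = x := by
  have hcard : Nat.card G < s.ncard + (MulOpposite.op x • s).ncard := by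
    rw [Set.ncard_smul_set]; omega
  obtain ⟨a, ha, b, hb, hba⟩ := Set.nonempty_inter_of_lt_ncard_add_ncard hcard
  refine ⟨a, ha, b, hb, ?_⟩
  simp only at hba
  rw [← hba, MulOpposite.smul_eq_mul_unop, MulOpposite.unop_op, inv_mul_cancel_left]

variable {H : Type*} [Group H] [IsMulCommutative H] [MulDistribMulAction H G]

theorem exists_smul_eq_mul_on_orbit {g h : G} (hg : Nat.card G < 2 * (orbit H g).ncard)
    (hh : ∀ c : H, c • h = h) : ∃ δ : H, ∀ a ∈ orbit H g, δ • a = h * a := by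
  have hcomm (c : H) (y : G) : c • (h * y) = h * c • y := by rw [smul_mul', hh]
  have hcard : Nat.card G < (orbit H g).ncard + (h • orbit H g).ncard := by
    rw [Set.ncard_smul_set]; omega
  obtain ⟨_, ⟨β, rfl⟩, _, ⟨γ, rfl⟩, hγβ⟩ := Set.nonempty_inter_of_lt_ncard_add_ncard hcard
  simp only [smul_eq_mul] at hγβ
  refine ⟨γ⁻¹ * β, ?_⟩
  rintro _ ⟨c, rfl⟩
  calc (γ⁻¹ * β) • c • g = c • γ⁻¹ • β • g := by
        simp only [smul_smul]
        rw [isMulCommutative_iff.mp ‹_› (γ⁻¹ * β) c]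
    _ = h * c • g := by rw [← hγβ, hcomm, hcomm, inv_smul_smul]

theorem eq_one_of_forall_smul_eq_of_card_lt {g h : G} (hg : Nat.card G < 2 * (orbit H g).ncard)
    (hh : ∀ c : H, c • h = h) : h = 1 := by
  obtain ⟨δ, hδ⟩ := exists_smul_eq_mul_on_orbit hg hh
  obtain ⟨a, ha, b, hb, hab⟩ := exists_mem_inv_mul_eq_of_card_lt hg g
  have hδg : δ • g = g := by
    rw [← hab, smul_mul', smul_inv', hδ a ha, hδ b hb, mul_inv_rev, mul_assoc,
      inv_mul_cancel_left]
  rw [← mul_eq_right, ← hδ g (mem_orbit_self g), hδg]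

end

/-- If an automorphism `α` of a finite group `G` has a cycle of length strictly greater than
`|G|/2`, then `α` is fixed-point free. -/
theorem stmt12 {G : Type*} [Group G] [Fintype G] (α : MulAut G)
    (h : ∃ g : G, Fintype.card G < 2 * Function.minimalPeriod (⇑α) g) :
    ∀ g : G, α g = g → g = 1 := by
  obtain ⟨g, hg⟩ := h
  intro y hy
  have hfix : Subgroup.zpowers α ≤ stabilizer (MulAut G) y := Subgroup.zpowers_le.mpr hy
  refine eq_one_of_forall_smul_eq_of_card_lt (g := g) ?_ fun c : Subgroup.zpowers α => hfix c.2
  rw [ncard_orbit_zpowers, Nat.card_eq_fintype_card]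
  exact hg
end

section
/- Let G be a finite abelian group, α an automorphism of G, and g ∈ G. Let o₁ be the order of α and let o₂ be the maximum order of an element of G fixed by α. Then the order of the affine map A_{α,g} : G → G, x ↦ g·α(x), as a permutation of G, divides o₁ · o₂. -/
/-!
Iterating `A = A_{α,g}` gives `A^n x = (g · α g ⋯ α^{n-1} g) · α^n x`, so `A^{ord α}` is
left multiplication by the "norm" `c = ∏_{i < ord α} α^i g`, and `ord A ∣ ord α · ord c`.
The norm is fixed by `α`. In a commutative group the orders of the elements of a submonoid
are closed under `lcm`, so the maximal order `o₂` among the fixed points is divisible by the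
order of every fixed point, in particular by `ord c`.
-/

open Finset

theorem Submonoid.orderOf_dvd_of_isGreatest {M : Type*} [CommMonoid M] (S : Submonoid M) {o : ℕ}
    (ho : IsGreatest {n | ∃ h ∈ S, orderOf h = n} o) {x : M} (hx : x ∈ S)
    (hx_fin : IsOfFinOrder x) : orderOf x ∣ o := by
  obtain ⟨⟨h, hS, rfl⟩, hmax⟩ := ho
  obtain ⟨z, hz, hz_ord⟩ := (Commute.all x h).exists_orderOf_eq_lcm
  have hle : (orderOf x).lcm (orderOf h) ≤ orderOf h :=
    hmax ⟨z, S.closure_le.2 (Set.insert_subset hx (Set.singleton_subset_iff.2 hS)) hz, hz_ord⟩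
  rcases (orderOf h).eq_zero_or_pos with h0 | h_pos
  · exact h0 ▸ dvd_zero _
  · have heq : (orderOf x).lcm (orderOf h) = orderOf h :=
      le_antisymm hle (Nat.le_of_dvd (Nat.lcm_pos hx_fin.orderOf_pos h_pos) (Nat.dvd_lcm_right _ _))
    exact heq ▸ Nat.dvd_lcm_left _ _

namespace MulAut

variable {G : Type*} [CommGroup G]

def affine (α : MulAut G) (g : G) : Equiv.Perm G := α.toEquiv.trans (Equiv.mulLeft g)

theorem affine_apply (α : MulAut G) (g x : G) : α.affine g x = g * α x := rfl

theorem affine_pow_apply (α : MulAut G) (g : G) (n : ℕ) (x : G) :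
    (α.affine g ^ n) x = (∏ i ∈ range n, (α ^ i) g) * (α ^ n) x := by
  induction n generalizing x with
  | zero => simp
  | succ n ih =>
    rw [pow_succ', Equiv.Perm.mul_apply, ih, affine_apply, map_mul, map_prod,
      prod_range_succ', pow_zero, one_apply, pow_succ']
    simp only [pow_succ', mul_apply]
    ac_rfl

theorem affine_pow_orderOf (α : MulAut G) (g : G) :
    α.affine g ^ orderOf α = Equiv.mulLeft (∏ i ∈ range (orderOf α), (α ^ i) g) := by
  ext x
  rw [affine_pow_apply, pow_orderOf_eq_one, one_apply, Equiv.coe_mulLeft]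

theorem orderOf_affine_dvd (α : MulAut G) (g : G) :
    orderOf (α.affine g) ∣ orderOf α * orderOf (∏ i ∈ range (orderOf α), (α ^ i) g) := by
  refine orderOf_dvd_of_pow_eq_one ?_
  rw [pow_mul, affine_pow_orderOf, Equiv.pow_mulLeft, pow_orderOf_eq_one, Equiv.mulLeft_one]

theorem apply_prod_range_pow_apply {α : MulAut G} {n : ℕ} (hn : α ^ n = 1) (g : G) :
    α (∏ i ∈ range n, (α ^ i) g) = ∏ i ∈ range n, (α ^ i) g := by
  have hshift := prod_range_succ' (fun i ↦ (α ^ i) g) n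
  rw [prod_range_succ, hn, pow_zero, mul_left_inj] at hshift
  rw [map_prod, hshift]
  simp only [pow_succ', mul_apply]

end MulAut

open MulAut in
/-- Let `G` be a finite abelian group, `α` an automorphism of `G` and `g ∈ G`. If `o₂` is
the maximum order of a fixed point of `α`, then the order of the affine map
`x ↦ g·α(x)` (as a permutation of `G`) divides `orderOf α · o₂`. -/
theorem stmt13 {G : Type*} [CommGroup G] [Fintype G] (α : MulAut G) (g : G) (o₂ : ℕ)
    (ho₂ : IsGreatest {n : ℕ | ∃ h : G, α h = h ∧ orderOf h = n} o₂) :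
    orderOf ((α.toEquiv.trans (Equiv.mulLeft g)) : Equiv.Perm G) ∣ orderOf α * o₂ := by
  change orderOf (α.affine g) ∣ _
  set c := ∏ i ∈ range (orderOf α), (α ^ i) g
  have hc_fixed : c ∈ MonoidHom.eqLocusM (α : G →* G) (MonoidHom.id G) :=
    apply_prod_range_pow_apply (pow_orderOf_eq_one α) g
  have hc : orderOf c ∣ o₂ :=
    Submonoid.orderOf_dvd_of_isGreatest _ ho₂ hc_fixed (isOfFinOrder_of_finite c)
  exact (orderOf_affine_dvd α g).trans (mul_dvd_mul_left _ hc)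
end

section
/- For every natural number n, the symmetric group S_n is an RCC-group: every automorphism α of S_n has a regular cycle, i.e., some permutation τ ∈ S_n has cycle length under α equal to the order of α. In particular, every finite group embeds into a finite RCC-group. -/
/-!
Let `m` be the order of `α`. A permutation `τ` has `α`-period `m` as soon as `α ^ (m / p)` moves
`τ` for every prime `p ∣ m`; the fixed points of `α ^ (m / p)` form a proper subgroup, so it
suffices that these subgroups do not cover `S_n`.

Two proper subgroups never cover a group. This settles `n ≤ 4`, where `α` acts faithfully on the
at most nine involutions, so `m` has at most two prime factors (three distinct primes sum to at
least ten).

For `n ≥ 5`, a nontrivial normal subgroup of `S_n` contains `A_n`, whose centralizer is trivial;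
hence the fixed subgroup of a nontrivial automorphism is core-free, `S_n` embeds into the
symmetric group on its cosets, and its index is at least `n`. By Neumann's lemma a cover by such
subgroups has at least `n` members. But `m` has fewer than `n` prime factors: `α` permutes the at
most `n / 2 + 1` classes of involutions, the power of `α` fixing all of them maps transpositions
to transpositions and is determined by its action on these `n (n - 1) / 2` elements, and the order
of a permutation of `N` points has `k` prime factors with `k² < N`, because `k` distinct primes sum
to more than `k²` while the prime factors of the order sum to at most the total cycle length.
-/

open Equiv Equiv.Perm Finset Function

lemma Finset.sum_le_prod_of_two_le {s : Finset ℕ} (h : ∀ x ∈ s, 2 ≤ x) :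
    ∑ x ∈ s, x ≤ ∏ x ∈ s, x := by
  induction s using Finset.induction_on with
  | empty => simp
  | insert a s ha ih =>
    rw [sum_insert ha, prod_insert ha]
    have h2a := h a (mem_insert_self a s)
    have hs := ih fun x hx => h x (mem_insert_of_mem hx)
    obtain rfl | ⟨b, hb⟩ := s.eq_empty_or_nonempty
    · simp
    · have : 2 ≤ ∏ x ∈ s, x := (h b (mem_insert_of_mem hb)).trans
        (single_le_prod' (fun x hx => (h x (mem_insert_of_mem hx)).trans' one_le_two) hb)
      nlinarith

lemma Nat.sum_primeFactors_le {a : ℕ} (ha : a ≠ 0) : ∑ p ∈ a.primeFactors, p ≤ a :=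
  (sum_le_prod_of_two_le fun _ hp => (Nat.prime_of_mem_primeFactors hp).two_le).trans
    (Nat.le_of_dvd (Nat.pos_of_ne_zero ha) (Nat.prod_primeFactors_dvd a))

lemma Multiset.sum_primeFactors_lcm_le {M : Multiset ℕ} (hM : 0 ∉ M) :
    ∑ p ∈ M.lcm.primeFactors, p ≤ M.sum := by
  induction M using Multiset.induction_on with
  | empty => simp
  | cons a M ih =>
    rw [Multiset.mem_cons, not_or] at hM
    have ha : a ≠ 0 := Ne.symm hM.1
    have hL : M.lcm ≠ 0 := (Multiset.lcm_ne_zero_iff M).2 hM.2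
    rw [Multiset.lcm_cons, Multiset.sum_cons]
    calc ∑ p ∈ (GCDMonoid.lcm a M.lcm).primeFactors, p
        ≤ ∑ p ∈ (a * M.lcm).primeFactors, p :=
          sum_le_sum_of_subset (Nat.primeFactors_mono (lcm_dvd_mul a _) (mul_ne_zero ha hL))
      _ ≤ ∑ p ∈ a.primeFactors, p + ∑ p ∈ M.lcm.primeFactors, p := by
          have := Nat.sum_primeFactors_gcd_add_sum_primeFactors_mul a M.lcm fun p => p
          omega
      _ ≤ a + M.sum := add_le_add (Nat.sum_primeFactors_le ha) (ih hM.2)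

lemma Equiv.Perm.sum_primeFactors_orderOf_le {Y : Type*} [Finite Y] (σ : Perm Y) :
    ∑ p ∈ (orderOf σ).primeFactors, p ≤ Nat.card Y := by
  classical
  have := Fintype.ofFinite Y
  rw [← lcm_cycleType, Nat.card_eq_fintype_card]
  calc _ ≤ σ.cycleType.sum :=
        Multiset.sum_primeFactors_lcm_le fun h => by have := two_le_of_mem_cycleType h; omega
    _ = #σ.support := sum_cycleType σ
    _ ≤ _ := card_le_univ _

lemma two_mul_card_le_of_forall_prime_le {s : Finset ℕ} {a : ℕ}
    (h : ∀ p ∈ s, p.Prime ∧ p ≤ a) : 2 * #s ≤ a + 1 := by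
  have hmaps : Set.MapsTo (fun p => (p - 1) / 2) s (range ((a + 1) / 2)) := fun p hp => by
    have := (h p hp).2
    have := (h p hp).1.two_le
    simp only [coe_range, Set.mem_Iio]
    omega
  have hinj : Set.InjOn (fun p => (p - 1) / 2) s := fun p hp q hq hpq => by
    have := (h p hp).1.two_le
    have := (h q hq).1.two_le
    simp only at hpq
    rcases (h p hp).1.eq_two_or_odd with rfl | hpo <;>
      rcases (h q hq).1.eq_two_or_odd with rfl | hqo <;> omega
  have := card_le_card_of_injOn _ hmaps hinj
  rw [card_range] at this
  omega

lemma sq_card_add_one_le_sum_of_prime {s : Finset ℕ} (hs : ∀ p ∈ s, p.Prime)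
    (hne : s.Nonempty) : #s ^ 2 + 1 ≤ ∑ p ∈ s, p := by
  induction s using Finset.induction_on_max with
  | empty => exact absurd hne Finset.not_nonempty_empty
  | insert a s hlt ih =>
    have has : a ∉ s := fun h => lt_irrefl a (hlt a h)
    have ha := hs a (mem_insert_self a s)
    rw [sum_insert has, card_insert_of_notMem has]
    obtain rfl | hne' := s.eq_empty_or_nonempty
    · simpa using ha.two_le
    · have hcount := two_mul_card_le_of_forall_prime_le (s := insert a s) (a := a)
        fun p hp => ⟨hs p hp, (mem_insert.1 hp).elim le_of_eq fun h => (hlt p h).le⟩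
      rw [card_insert_of_notMem has] at hcount
      have := ih (fun p hp => hs p (mem_insert_of_mem hp)) hne'
      nlinarith

lemma sq_card_primeFactors_lt {m N : ℕ} (hN : 0 < N) (h : ∑ p ∈ m.primeFactors, p ≤ N) :
    #m.primeFactors ^ 2 < N := by
  obtain h0 | hne := m.primeFactors.eq_empty_or_nonempty
  · simpa [h0] using hN
  · have := sq_card_add_one_le_sum_of_prime (fun _ => Nat.prime_of_mem_primeFactors) hne
    omega

lemma add_lt_of_sq_lt {a b n : ℕ} (ha : a ^ 2 < n / 2 + 1) (hb : b ^ 2 < n.choose 2) :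
    a + b < n := by
  have hn : 2 * n.choose 2 + n = n * n := by
    rw [Nat.choose_two_right, Nat.mul_div_cancel' (Nat.even_mul_pred_self n).two_dvd]
    cases n <;> simp [Nat.mul_succ]
  have := Nat.div_mul_le_self n 2
  nlinarith [two_mul_le_add_sq a b]

lemma primeFactors_orderOf_subset {G H : Type*} [Monoid G] [Monoid H] (f : G →* H) (g : G) :
    (orderOf g).primeFactors ⊆
      (orderOf (f g)).primeFactors ∪ (orderOf (g ^ orderOf (f g))).primeFactors := by
  obtain h | h := eq_or_ne (orderOf g) 0
  · simp [h]
  have hd := orderOf_map_dvd f g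
  have hf : orderOf (f g) ≠ 0 := ne_zero_of_dvd_ne_zero h hd
  have hq : orderOf g / orderOf (f g) ≠ 0 :=
    (Nat.div_pos (Nat.le_of_dvd (Nat.pos_of_ne_zero h) hd) (Nat.pos_of_ne_zero hf)).ne'
  rw [orderOf_pow_of_dvd hf hd, ← Nat.primeFactors_mul hf hq, Nat.mul_div_cancel' hd]

lemma pow_orderOf_div_ne_one {G : Type*} [Monoid G] {g : G} {p : ℕ}
    (hp : p ∈ (orderOf g).primeFactors) : g ^ (orderOf g / p) ≠ 1 := by
  obtain ⟨hp, hdvd, h0⟩ := Nat.mem_primeFactors.1 hp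
  exact pow_ne_one_of_lt_orderOf
    (Nat.div_pos (Nat.le_of_dvd (Nat.pos_of_ne_zero h0) hdvd) hp.pos).ne'
    (Nat.div_lt_self (Nat.pos_of_ne_zero h0) hp.one_lt)

lemma MulAction.period_eq_orderOf_of_forall_primeFactors {A X : Type*} [Monoid A] [MulAction A X]
    {a : A} (ha : orderOf a ≠ 0) {x : X}
    (h : ∀ p ∈ (orderOf a).primeFactors, a ^ (orderOf a / p) • x ≠ x) :
    MulAction.period a x = orderOf a := by
  obtain ⟨q, hq⟩ := MulAction.period_dvd_orderOf a x
  by_contra hne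
  have hq1 : q ≠ 1 := by rintro rfl; exact hne (by rw [hq, mul_one])
  set p := q.minFac
  have hpq : p ∣ q := q.minFac_dvd
  have hp : p ∈ (orderOf a).primeFactors := Nat.mem_primeFactors.2
    ⟨Nat.minFac_prime hq1, hq ▸ dvd_mul_of_dvd_right hpq _, ha⟩
  refine h p hp (MulAction.pow_smul_eq_iff_period_dvd.2 (Nat.dvd_div_of_mul_dvd ?_))
  rw [hq, mul_comm p]
  exact mul_dvd_mul_left _ hpq

lemma Subgroup.exists_notMem_notMem_s19 {G : Type*} [Group G] {H K : Subgroup G} (hH : H ≠ ⊤)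
    (hK : K ≠ ⊤) : ∃ g, g ∉ H ∧ g ∉ K := by
  obtain ⟨x, hx⟩ := SetLike.exists_not_mem_of_ne_top H hH
  obtain ⟨y, hy⟩ := SetLike.exists_not_mem_of_ne_top K hK
  by_cases hxK : x ∈ K
  · by_cases hyH : y ∈ H
    · exact ⟨x * y, fun h => hx ((H.mul_mem_cancel_right hyH).1 h),
        fun h => hy ((K.mul_mem_cancel_left hxK).1 h)⟩
    · exact ⟨y, hyH, hy⟩
  · exact ⟨x, hx, hxK⟩

lemma Subgroup.exists_forall_notMem_of_card_le_two_s19 {G ι : Type*} [Group G]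
    {H : ι → Subgroup G} {s : Finset ι} (hs : #s ≤ 2) (hH : ∀ i ∈ s, H i ≠ ⊤) :
    ∃ g, ∀ i ∈ s, g ∉ H i := by
  classical
  interval_cases h : #s
  · exact ⟨1, by simp [Finset.card_eq_zero.1 h]⟩
  · obtain ⟨i, rfl⟩ := Finset.card_eq_one.1 h
    have hi := hH i (mem_singleton_self i)
    obtain ⟨g, hg, -⟩ := exists_notMem_notMem_s19 hi hi
    exact ⟨g, by simpa using hg⟩
  · obtain ⟨i, j, -, rfl⟩ := Finset.card_eq_two.1 h
    obtain ⟨g, hgi, hgj⟩ := exists_notMem_notMem_s19 (hH i (by simp)) (hH j (by simp))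
    exact ⟨g, by simp [hgi, hgj]⟩

lemma Subgroup.index_normalCore_dvd_factorial {G : Type*} [Group G] (H : Subgroup G)
    [H.FiniteIndex] : H.normalCore.index ∣ H.index.factorial := by
  rw [Subgroup.normalCore_eq_ker, Subgroup.index_ker, Subgroup.index_eq_card, ← Nat.card_perm]
  exact Subgroup.card_subgroup_dvd_card _

def MulAut.fixedSubgroup_s19 {G : Type*} [Group G] (β : MulAut G) : Subgroup G :=
  (β : G →* G).eqLocus (MonoidHom.id G)

lemma MulAut.fixedSubgroup_ne_top_s19 {G : Type*} [Group G] {β : MulAut G} (hβ : β ≠ 1) :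
    β.fixedSubgroup_s19 ≠ ⊤ :=
  fun h => hβ (MulEquiv.ext fun g => (h ▸ Subgroup.mem_top g : g ∈ β.fixedSubgroup_s19))

section ConjClasses

variable {G : Type*} [Group G]

instance : MulAction (MulAut G) (ConjClasses G) where
  smul β := ConjClasses.map (β : G →* G)
  one_smul c := by obtain ⟨g, rfl⟩ := c.exists_rep; rfl
  mul_smul β γ c := by obtain ⟨g, rfl⟩ := c.exists_rep; rfl

variable (G) in
def involutions : SubMulAction (MulAut G) G where
  carrier := {g | orderOf g = 2}
  smul_mem' β g hg := (MulEquiv.orderOf_eq β g).trans hg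

variable (G) in
def involutionClasses : SubMulAction (MulAut G) (ConjClasses G) where
  carrier := {c | ∃ g, ConjClasses.mk g = c ∧ orderOf g = 2}
  smul_mem' := by
    rintro β _ ⟨g, rfl, hg⟩
    exact ⟨β g, rfl, (MulEquiv.orderOf_eq β g).trans hg⟩

variable (G) in
def involutionClassesFixingSubgroup : Subgroup (MulAut G) :=
  fixingSubgroup (MulAut G) (involutionClasses G : Set (ConjClasses G))

end ConjClasses

section Perm

variable {α : Type*} [Fintype α] [DecidableEq α]

lemma centralizer_alternatingGroup_eq_bot (h5 : 5 ≤ Nat.card α) :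
    Subgroup.centralizer (alternatingGroup α : Set (Perm α)) = ⊥ := by
  by_contra hne
  have := (Subgroup.nontrivial_iff_ne_bot _).2 hne
  have hle := alternatingGroup_le_of_normal h5 this
  have := alternatingGroup.isMulCommutative_iff_card_le_three.1
    (Subgroup.le_centralizer_iff_isMulCommutative.1 hle)
  omega

lemma MulAut.eq_one_of_forall_isSwap {β : MulAut (Perm α)}
    (h : ∀ σ : Perm α, σ.IsSwap → β σ = σ) : β = 1 := by
  have : (β : Perm α →* Perm α) = MonoidHom.id _ := MonoidHom.eq_of_eqOn_top <| by
    rw [← closure_isSwap]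
    exact MonoidHom.eqOn_closure h
  exact MulEquiv.ext fun σ => DFunLike.congr_fun this σ

lemma MulAut.eq_one_of_forall_mem_alternatingGroup (h5 : 5 ≤ Nat.card α) {β : MulAut (Perm α)}
    (h : ∀ σ ∈ alternatingGroup α, β σ = σ) : β = 1 := by
  refine MulEquiv.ext fun g => ?_
  suffices g⁻¹ * β g ∈ Subgroup.centralizer (alternatingGroup α : Set (Perm α)) by
    rw [centralizer_alternatingGroup_eq_bot h5, Subgroup.mem_bot, inv_mul_eq_one] at this
    exact this.symm
  rw [Subgroup.mem_centralizer_iff]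
  intro σ hσ
  have hconj := h _ ((alternatingGroup.normal (α := α)).conj_mem σ hσ g)
  rw [map_mul, map_mul, map_inv, h σ hσ] at hconj
  have e : β g * σ = g * σ * g⁻¹ * β g := by rw [← hconj]; group
  calc σ * (g⁻¹ * β g) = g⁻¹ * (g * σ * g⁻¹ * β g) := by group
    _ = g⁻¹ * β g * σ := by rw [← e, mul_assoc]

lemma MulAut.normalCore_fixedSubgroup_eq_bot (h5 : 5 ≤ Nat.card α) {β : MulAut (Perm α)}
    (hβ : β ≠ 1) : β.fixedSubgroup_s19.normalCore = ⊥ := by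
  by_contra hne
  refine hβ (eq_one_of_forall_mem_alternatingGroup h5 fun σ hσ => ?_)
  exact β.fixedSubgroup_s19.normalCore_le
    (alternatingGroup_le_of_normal h5 ((Subgroup.nontrivial_iff_ne_bot _).2 hne) hσ)

lemma MulAut.card_le_index_fixedSubgroup (h5 : 5 ≤ Nat.card α) {β : MulAut (Perm α)}
    (hβ : β ≠ 1) : Nat.card α ≤ β.fixedSubgroup_s19.index := by
  have h := β.fixedSubgroup_s19.index_normalCore_dvd_factorial
  rw [normalCore_fixedSubgroup_eq_bot h5 hβ, Subgroup.index_bot, Nat.card_perm] at h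
  by_contra! hlt
  exact (Nat.le_of_dvd (Nat.factorial_pos _) h).not_gt
    ((Nat.factorial_lt (Nat.pos_of_ne_zero Subgroup.index_ne_zero_of_finite)).2 hlt)

lemma toPermHom_involutions_injective :
    Injective (MulAction.toPermHom (MulAut (Perm α)) (involutions (Perm α))) := by
  refine (injective_iff_map_eq_one _).2 fun β hβ =>
    MulAut.eq_one_of_forall_isSwap fun σ hσ => ?_
  exact congrArg Subtype.val (DFunLike.congr_fun hβ ⟨σ, hσ.orderOf⟩)

lemma isSwap_apply_of_mem_fixingSubgroup {β : MulAut (Perm α)}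
    (hβ : β ∈ involutionClassesFixingSubgroup (Perm α)) {σ : Perm α} (hσ : σ.IsSwap) :
    (β σ).IsSwap := by
  have hmk : ConjClasses.mk (β σ) = ConjClasses.mk σ :=
    (mem_fixingSubgroup_iff _).1 hβ _ ⟨σ, rfl, hσ.orderOf⟩
  rw [isSwap_iff_cycleType,
    ← isConj_iff_cycleType_eq.1 (ConjClasses.mk_eq_mk_iff_isConj.1 hmk).symm]
  exact isSwap_iff_cycleType.1 hσ

variable (α) in
def swaps : SubMulAction (involutionClassesFixingSubgroup (Perm α)) (Perm α) where
  carrier := {σ | σ.IsSwap}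
  smul_mem' k _ hσ := isSwap_apply_of_mem_fixingSubgroup k.2 hσ

lemma toPermHom_swaps_injective :
    Injective (MulAction.toPermHom (involutionClassesFixingSubgroup (Perm α)) (swaps α)) := by
  refine (injective_iff_map_eq_one _).2 fun k hk =>
    Subtype.ext (MulAut.eq_one_of_forall_isSwap fun σ hσ => ?_)
  have h := DFunLike.congr_fun hk (⟨σ, hσ⟩ : swaps α)
  exact congrArg Subtype.val h

lemma Equiv.Perm.IsSwap.eq_of_support_eq {σ τ : Perm α} (hσ : σ.IsSwap) (hτ : τ.IsSwap)
    (h : σ.support = τ.support) : σ = τ := by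
  obtain ⟨x, y, hxy, rfl⟩ := hσ
  obtain ⟨u, v, huv, rfl⟩ := hτ
  rw [support_swap hxy, support_swap huv, ← coe_inj, coe_pair, coe_pair,
    Set.pair_eq_pair_iff] at h
  obtain ⟨rfl, rfl⟩ | ⟨rfl, rfl⟩ := h
  · rfl
  · exact swap_comm _ _

lemma card_swaps_le : Nat.card (swaps α) ≤ (Nat.card α).choose 2 := by
  classical
  rw [Nat.card_eq_fintype_card (α := α), ← card_univ, ← card_powersetCard]
  have := Fintype.ofFinite (swaps α)
  rw [Nat.card_eq_fintype_card, ← card_univ]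
  refine card_le_card_of_injOn (fun σ => (σ : Perm α).support) (fun σ _ => ?_)
    fun σ _ τ _ h => Subtype.ext (σ.2.eq_of_support_eq τ.2 h)
  simpa using card_support_eq_two.2 σ.2

lemma Equiv.Perm.cycleType_eq_replicate_of_orderOf_eq_two {g : Perm α} (hg : orderOf g = 2) :
    g.cycleType = Multiset.replicate (#g.support / 2) 2 := by
  obtain ⟨m, hm⟩ := cycleType_prime_order (hg ▸ Nat.prime_two)
  rw [hg] at hm
  rw [← sum_cycleType, hm]
  simp

lemma card_involutionClasses_le :
    Nat.card (involutionClasses (Perm α)) ≤ Nat.card α / 2 + 1 := by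
  let rep (c : involutionClasses (Perm α)) : Perm α := c.2.choose
  have hrep (c : involutionClasses (Perm α)) :
      ConjClasses.mk (rep c) = c ∧ orderOf (rep c) = 2 :=
    c.2.choose_spec
  let f (c : involutionClasses (Perm α)) : Fin (Nat.card α / 2 + 1) :=
    ⟨#(rep c).support / 2, Nat.lt_succ_of_le
      (Nat.div_le_div_right (Nat.card_eq_fintype_card (α := α) ▸ card_le_univ _))⟩
  have hf : Injective f := fun c d hcd => by
    have hct : (rep c).cycleType = (rep d).cycleType := by
      rw [cycleType_eq_replicate_of_orderOf_eq_two (hrep c).2,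
        cycleType_eq_replicate_of_orderOf_eq_two (hrep d).2]
      exact congrArg (Multiset.replicate · 2) (Fin.mk.inj_iff.1 hcd)
    apply Subtype.ext
    rw [← (hrep c).1, ← (hrep d).1]
    exact ConjClasses.mk_eq_mk_iff_isConj.2 (isConj_iff_cycleType_eq.2 hct)
  simpa using Nat.card_le_card_of_injective f hf

lemma card_primeFactors_orderOf_lt (h5 : 5 ≤ Nat.card α) (β : MulAut (Perm α)) :
    #(orderOf β).primeFactors < Nat.card α := by
  set ψ := MulAction.toPermHom (MulAut (Perm α)) (involutionClasses (Perm α))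
  have hmem : β ^ orderOf (ψ β) ∈ involutionClassesFixingSubgroup (Perm α) :=
    (mem_fixingSubgroup_iff _).2 fun c hc => by
      have h := DFunLike.congr_fun (pow_orderOf_eq_one (ψ β)) ⟨c, hc⟩
      rw [← map_pow] at h
      exact congrArg Subtype.val h
  have hA := sq_card_primeFactors_lt (Nat.succ_pos _)
    ((ψ β).sum_primeFactors_orderOf_le.trans card_involutionClasses_le)
  have hB := sq_card_primeFactors_lt (m := orderOf (β ^ orderOf (ψ β)))
    (Nat.choose_pos (n := Nat.card α) (k := 2) (by omega)) <| by
    rw [← Subgroup.orderOf_mk _ hmem, ← orderOf_injective _ toPermHom_swaps_injective]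
    exact (Equiv.Perm.sum_primeFactors_orderOf_le _).trans card_swaps_le
  calc #(orderOf β).primeFactors
      ≤ #(orderOf (ψ β)).primeFactors + #(orderOf (β ^ orderOf (ψ β))).primeFactors :=
        (card_le_card (primeFactors_orderOf_subset ψ β)).trans (card_union_le _ _)
    _ < Nat.card α := add_lt_of_sq_lt hA hB

end Perm

lemma card_involutions_le_nine {n : ℕ} (hn : n ≤ 4) :
    Nat.card (involutions (Perm (Fin n))) ≤ 9 := by
  have : Nat.card (involutions (Perm (Fin n))) =
      Nat.card {σ : Perm (Fin n) // σ ^ 2 = 1 ∧ σ ≠ 1} :=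
    Nat.card_congr (Equiv.subtypeEquivRight fun σ => orderOf_eq_prime_iff)
  rw [this, Nat.card_eq_fintype_card]
  interval_cases n <;> decide

lemma card_primeFactors_orderOf_le_two {n : ℕ} (hn : n ≤ 4) (β : MulAut (Perm (Fin n))) :
    #(orderOf β).primeFactors ≤ 2 := by
  have := sq_card_primeFactors_lt (m := orderOf β) (N := 9) (by norm_num) <| by
    rw [← orderOf_injective _ toPermHom_involutions_injective β]
    exact (Equiv.Perm.sum_primeFactors_orderOf_le _).trans (card_involutions_le_nine hn)
  nlinarith

theorem exists_minimalPeriod_eq_orderOf (n : ℕ) (α : MulAut (Perm (Fin n))) :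
    ∃ τ : Perm (Fin n), minimalPeriod α τ = orderOf α := by
  set F := fun p => (α ^ (orderOf α / p)).fixedSubgroup_s19
  have hproper : ∀ p ∈ (orderOf α).primeFactors, F p ≠ ⊤ := fun p hp =>
    MulAut.fixedSubgroup_ne_top_s19 (pow_orderOf_div_ne_one hp)
  obtain ⟨τ, hτ⟩ : ∃ τ, ∀ p ∈ (orderOf α).primeFactors, τ ∉ F p := by
    by_cases hn : n ≤ 4
    · exact Subgroup.exists_forall_notMem_of_card_le_two_s19
        (card_primeFactors_orderOf_le_two hn α) hproper
    by_contra! hcover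
    obtain ⟨p, hp, -, hidx⟩ :=
      Subgroup.exists_index_le_card_of_leftCoset_cover (g := 1) (H := F)
      (Set.eq_univ_of_forall fun τ => by
        obtain ⟨p, hp, hτ⟩ := hcover τ
        exact Set.mem_biUnion hp (by simpa using hτ))
    have hF : n ≤ (F p).index := by
      simpa using MulAut.card_le_index_fixedSubgroup (by simp; omega) (pow_orderOf_div_ne_one hp)
    have := card_primeFactors_orderOf_lt (by simp; omega) α
    rw [Nat.card_fin] at this
    omega
  exact ⟨τ, MulAction.period_eq_orderOf_of_forall_primeFactors (orderOf_pos α).ne' hτ⟩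

/-- Every symmetric group `S_n` is an RCC-group: every automorphism of `S_n` has a regular
cycle. In particular (via Cayley's theorem), every finite group embeds into a finite
RCC-group. -/
theorem stmt19 :
    (∀ (n : ℕ) (α : MulAut (Equiv.Perm (Fin n))),
      ∃ τ : Equiv.Perm (Fin n), Function.minimalPeriod (⇑α) τ = orderOf α) ∧
    ∀ (G : Type*) [Group G] [Fintype G],
      ∃ (n : ℕ) (f : G →* Equiv.Perm (Fin n)), Function.Injective f :=
  ⟨exists_minimalPeriod_eq_orderOf, fun G _ _ => ⟨Fintype.card G,
    (Fintype.equivFin G).permCongrHom.toMonoidHom.comp (MulAction.toPermHom G G),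
    (Fintype.equivFin G).permCongrHom.injective.comp MulAction.toPerm_injective⟩⟩
end
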